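/- arXiv:1802.00239 — 4 statements merged into one kernel-verified Lean document; each statement's English description precedes it below -/
import Mathlib

section
/- Fix an integer n ≥ 2. Let 𝓜 be a complex algebra isomorphic (as an algebra) to the full matrix algebra M_k(ℂ) for some k ∈ ℕ, let X be a complex linear space, and let P : 𝓜 → X be an orthogonally additive n-homogeneous polynomial. Then there exists a unique linear map Φ : 𝓜 → X such that P(a) = Φ(aⁿ) for every a ∈ 𝓜. Moreover, if φ : 𝓜ⁿ → X is the symmetric n-linear map associated with P and e is the identity of 𝓜, then Φ(a) = φ(a, e, …, e) for every a ∈ 𝓜. -/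
/-!
Write `P a = φ (a, …, a)` and let `D u = ∑ᵢ φ (1, …, u, …, 1)` (`u` in slot `i`) be the
derivative of `P` at `1`. The heart of the proof is the identity `n • P a = D (aⁿ)`, so that
`Φ = n⁻¹ • D` works.

`D u` is the coefficient of `t` in the polynomial `t ↦ P (t • u + 1)`. For an idempotent `e`,
orthogonal additivity gives `P (t • e + 1) = (t + 1)ⁿ • P e + P (1 - e)`, hence `D e = n • P e`;
if `P a = Φ (aⁿ)`, expanding `(t • a + 1)ⁿ` gives `D = n • Φ`, which proves uniqueness and, for
symmetric `φ`, the formula `Φ a = φ (a, 1, …, 1)`. Orthogonal additivity and homogeneity extend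
`n • P a = D (aⁿ)` to combinations `a = ∑ λᵢ • eᵢ` of orthogonal idempotents, i.e. (Lagrange
interpolation) to every `a` annihilated by a separable polynomial. In `M_k(ℂ)` these are
Zariski dense: on the line `a + t • b`, where `a + b` is diagonal with distinct entries, the
discriminant of the characteristic polynomial is a nonzero polynomial in `t`. The polynomial
`t ↦ n • P (a + t • b) - D ((a + t • b)ⁿ)` thus has infinitely many roots, so it vanishes at `0`.
-/

open Finset Polynomial

section PolynomialIdentity

variable {K V : Type*} [Field K] [AddCommGroup V] [Module K V]

theorem eq_zero_of_sum_pow_smul_eq_zero {N : ℕ} {x : ℕ → V} {S : Set K} (hS : S.Infinite)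
    (h : ∀ t ∈ S, ∑ j ∈ range N, t ^ j • x j = 0) {j : ℕ} (hj : j < N) : x j = 0 := by
  refine (Module.forall_dual_apply_eq_zero_iff K (x j)).mp fun f => ?_
  let p : K[X] := ∑ i ∈ range N, C (f (x i)) * X ^ i
  have hp : p = 0 := eq_zero_of_infinite_isRoot p <| hS.mono fun t ht => by
    have := congrArg f (h t ht)
    simp only [map_sum, map_smul, smul_eq_mul, map_zero] at this
    simpa only [p, Set.mem_ofPred_eq, IsRoot, eval_finsetSum, eval_mul, eval_C, eval_pow, eval_X,
      mul_comm] using this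
  simpa [p, finsetSum_coeff, coeff_C_mul_X_pow, hj] using congrArg (coeff · j) hp

theorem eq_of_forall_sum_pow_smul_eq [Infinite K] {N : ℕ} {x y : ℕ → V}
    (h : ∀ t : K, ∑ j ∈ range N, t ^ j • x j = ∑ j ∈ range N, t ^ j • y j) {j : ℕ} (hj : j < N) :
    x j = y j :=
  sub_eq_zero.mp <| eq_zero_of_sum_pow_smul_eq_zero (x := fun j => x j - y j) Set.infinite_univ
    (fun (t : K) _ => by simp only [smul_sub, sum_sub_distrib, h t, sub_self]) hj

end PolynomialIdentity

def OrthogonallyAdditive {A V : Type*} [NonUnitalNonAssocSemiring A] [Add V] (P : A → V) : Prop :=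
  ∀ a b : A, a * b = 0 → b * a = 0 → P (a + b) = P a + P b

namespace OrthogonallyAdditive

variable {A V : Type*} [NonUnitalNonAssocSemiring A] [AddCommGroup V] {P : A → V}

theorem map_zero (hP : OrthogonallyAdditive P) : P 0 = 0 := by
  simpa using hP 0 0 (mul_zero 0) (mul_zero 0)

theorem map_sum (hP : OrthogonallyAdditive P) {ι : Type*} (s : Finset ι) (x : ι → A)
    (hx : (s : Set ι).Pairwise fun i j => x i * x j = 0) :
    P (∑ i ∈ s, x i) = ∑ i ∈ s, P (x i) := by
  classical
  induction s using Finset.induction_on with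
  | empty => simpa using hP.map_zero
  | insert i s hi ih =>
    have hx' : (s : Set ι).Pairwise fun i j => x i * x j = 0 :=
      hx.mono (by simp)
    have hne : ∀ j ∈ s, i ≠ j := fun j hj hij => hi (hij ▸ hj)
    rw [sum_insert hi, sum_insert hi, ← ih hx']
    refine hP _ _ ?_ ?_
    · rw [mul_sum]
      exact sum_eq_zero fun j hj => hx (by simp) (by simp [hj]) (hne j hj)
    · rw [sum_mul]
      exact sum_eq_zero fun j hj => hx (by simp [hj]) (by simp) (hne j hj).symm

end OrthogonallyAdditive

theorem OrthogonalIdempotents.sum_smul_pow {K A ι : Type*} [CommSemiring K] [Semiring A]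
    [Algebra K A] [Fintype ι] {e : ι → A} (he : OrthogonalIdempotents e) (c : ι → K) {n : ℕ}
    (hn : n ≠ 0) : (∑ i, c i • e i) ^ n = ∑ i, c i ^ n • e i := by
  classical
  induction n with
  | zero => exact absurd rfl hn
  | succ m ih =>
    rcases Nat.eq_zero_or_pos m with rfl | hm
    · simp
    rw [pow_succ, ih hm.ne', sum_mul_sum]
    refine sum_congr rfl fun i _ => ?_
    simp [he.mul_eq, pow_succ', smul_smul]

theorem exists_orthogonalIdempotents_of_aeval_nodal_eq_zero {K A : Type*} [Field K] [Ring A]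
    [Algebra K A] {s : Finset K} {x : A} (hx : aeval x (Lagrange.nodal s id) = 0) :
    ∃ e : s → A, OrthogonalIdempotents e ∧ x = ∑ r : s, (r : K) • e r := by
  classical
  rcases s.eq_empty_or_nonempty with rfl | hs
  · have h10 : (1 : A) = 0 := by simpa [Lagrange.nodal_empty] using hx
    exact ⟨0, ⟨fun r => (notMem_empty _ r.2).elim, fun r => (notMem_empty _ r.2).elim⟩,
      by rw [← mul_one x, h10, mul_zero, univ_eq_empty, sum_empty]⟩
  let e (r : K) : A := aeval x (Lagrange.basis s id r)
  have heigen (r : K) (hr : r ∈ s) : x * e r = r • e r := by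
    have hfactor : (X - C r) * Lagrange.basis s id r =
        C (Lagrange.nodalWeight s id r) * Lagrange.nodal s id := by
      rw [Lagrange.basis_eq_prod_sub_inv_mul_nodal_div hr, mul_left_comm, id,
        EuclideanDomain.mul_div_cancel' (X_sub_C_ne_zero r) (Lagrange.X_sub_C_dvd_nodal id hr)]
    have := congrArg (aeval x) hfactor
    rwa [map_mul, map_mul, hx, mul_zero, map_sub, aeval_X, aeval_C, sub_mul, sub_eq_zero,
      ← Algebra.smul_def] at this
  have hmul (r : K) (hr : r ∈ s) (q : K[X]) : aeval x q * e r = q.eval r • e r := by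
    have := Module.End.aeval_apply_of_mem_apply_eq_smul (f := Algebra.lmul K A x) (p := q)
      (heigen r hr)
    rwa [aeval_algHom_apply] at this
  have hinj : Set.InjOn id (s : Set K) := Set.injOn_id _
  refine ⟨fun r => e r, ⟨fun r => ?_, fun r r' hrr' => ?_⟩, ?_⟩
  · have := hmul r r.2 (Lagrange.basis s id r)
    rwa [show (Lagrange.basis s id r).eval (r : K) = 1 from Lagrange.eval_basis_self hinj r.2,
      one_smul] at this
  · have := hmul r' r'.2 (Lagrange.basis s id r)
    rwa [show (Lagrange.basis s id r).eval (r' : K) = 0 from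
      Lagrange.eval_basis_of_ne (v := id) (Subtype.coe_ne_coe.mpr hrr') r'.2, zero_smul] at this
  · have hsum : ∑ r ∈ s, e r = 1 := by
      rw [← map_sum, Lagrange.sum_basis hinj hs, map_one]
    rw [sum_coe_sort s fun r => r • e r, ← mul_one x, ← hsum, mul_sum]
    exact sum_congr rfl fun r hr => heigen r hr

theorem Polynomial.Separable.aeval_nodal_roots_eq_zero {K A : Type*} [Field K] [IsAlgClosed K]
    [Ring A] [Algebra K A] [DecidableEq K] {p : K[X]} (hp : p.Separable) {x : A}
    (hx : aeval x p = 0) :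
    aeval x (Lagrange.nodal p.roots.toFinset id) = 0 := by
  have hfactor : C p.leadingCoeff * Lagrange.nodal p.roots.toFinset id = p := by
    rw [Lagrange.nodal, prod_eq_multiset_prod, Multiset.toFinset_val, (nodup_roots hp).dedup]
    exact C_leadingCoeff_mul_prod_multiset_X_sub_C IsAlgClosed.card_roots_eq_natDegree
  rw [← hfactor, map_mul, aeval_C, ← Algebra.smul_def] at hx
  exact (smul_eq_zero.mp hx).resolve_left (leadingCoeff_ne_zero.mpr hp.ne_zero)

namespace MultilinearMap

section CommSemiring

variable {R A V : Type*} [CommSemiring R] [AddCommMonoid V] [Module R V] {n : ℕ}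

theorem map_diag_smul [AddCommMonoid A] [Module R A]
    (f : MultilinearMap R (fun _ : Fin n => A) V) (c : R) (a : A) :
    f (fun _ => c • a) = c ^ n • f (fun _ => a) := by
  simpa using f.map_smul_univ (fun _ => c) (fun _ => a)

theorem map_diag_smul_add [AddCommMonoid A] [Module R A]
    (f : MultilinearMap R (fun _ : Fin n => A) V) (c : R) (u v : A) :
    f (fun _ => c • u + v) = ∑ j ∈ Finset.range (n + 1), c ^ j •
      ∑ s ∈ powersetCard j univ, f (s.piecewise (fun _ => u) fun _ => v) := by
  have hpiece (s : Finset (Fin n)) : f (s.piecewise (fun _ => c • u) fun _ => v) =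
      c ^ #s • f (s.piecewise (fun _ => u) fun _ => v) := by
    rw [← prod_const, ← f.map_piecewise_smul]
    congr 1
    ext i
    by_cases hi : i ∈ s <;> simp [hi]
  rw [show (fun _ : Fin n => c • u + v) = (fun _ => c • u) + fun _ => v from rfl, f.map_add_univ,
    ← powerset_univ, sum_powerset, card_univ, Fintype.card_fin]
  simp_rw [hpiece, smul_sum]
  refine sum_congr rfl fun j _ => sum_congr rfl fun s hs => ?_
  rw [(mem_powersetCard.mp hs).2]

def derivAtOne [AddCommMonoid A] [One A] [Module R A]
    (φ : MultilinearMap R (fun _ : Fin n => A) V) : A →ₗ[R] V :=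
  ∑ i, φ.toLinearMap (fun _ => 1) i

theorem derivAtOne_apply [AddCommMonoid A] [One A] [Module R A]
    (φ : MultilinearMap R (fun _ : Fin n => A) V) (u : A) :
    φ.derivAtOne u = ∑ i, φ (Function.update (fun _ => 1) i u) := by
  simp [derivAtOne, LinearMap.sum_apply]

theorem derivAtOne_eq_of_symmetric [AddCommMonoid A] [One A] [Module R A]
    (φ : MultilinearMap R (fun _ : Fin n => A) V)
    (hφ : ∀ (v : Fin n → A) (σ : Equiv.Perm (Fin n)), φ (fun i => v (σ i)) = φ v)
    (i : Fin n) (u : A) :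
    φ.derivAtOne u = (n : R) • φ (Function.update (fun _ => 1) i u) := by
  have (j : Fin n) :
      φ (Function.update (fun _ => 1) j u) = φ (Function.update (fun _ => 1) i u) := by
    conv_rhs => rw [← hφ _ (Equiv.swap i j)]
    congr 1
    have := Function.update_comp_equiv (fun _ : Fin n => (1 : A)) (Equiv.swap i j) i u
    simp only [Equiv.symm_swap, Equiv.swap_apply_left] at this
    exact this.symm
  simp [derivAtOne_apply, this, Nat.cast_smul_eq_nsmul]

end CommSemiring

theorem map_diag_eq_zero_of_forall_mem {K A V : Type*} [Field K] [AddCommGroup A] [Module K A]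
    [AddCommGroup V] [Module K V] {n : ℕ} (ψ : MultilinearMap K (fun _ : Fin n => A) V) {a b : A}
    {S : Set K} (hS : S.Infinite) (h : ∀ t ∈ S, ψ (fun _ => t • b + a) = 0) :
    ψ (fun _ => a) = 0 := by
  simpa using eq_zero_of_sum_pow_smul_eq_zero hS
    (fun t ht => (ψ.map_diag_smul_add t b a).symm.trans (h t ht)) (Nat.succ_pos n)

section Algebra

variable {K A V : Type*} [Field K] [Ring A] [Algebra K A] [AddCommGroup V] [Module K V] {n : ℕ}
  (φ : MultilinearMap K (fun _ : Fin n => A) V)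

theorem derivAtOne_eq_of_forall_eq_sum [Infinite K] (hn : 0 < n) (u : A) (y : ℕ → V)
    (h : ∀ t : K, φ (fun _ => t • u + 1) = ∑ j ∈ Finset.range (n + 1), t ^ j • y j) :
    φ.derivAtOne u = y 1 := by
  have hcoeff : ∑ s ∈ powersetCard 1 univ, φ (s.piecewise (fun _ => u) fun _ => 1) =
      φ.derivAtOne u := by
    simp [powersetCard_one, piecewise_singleton, derivAtOne_apply]
  rw [← hcoeff]
  exact eq_of_forall_sum_pow_smul_eq (fun t => (φ.map_diag_smul_add t u 1).symm.trans (h t))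
    (by omega)

theorem derivAtOne_eq_smul_of_isIdempotentElem [CharZero K]
    (hφ : OrthogonallyAdditive fun a : A => φ fun _ => a) (hn : 0 < n) {e : A}
    (he : IsIdempotentElem e) : φ.derivAtOne e = (n : K) • φ (fun _ => e) := by
  refine φ.derivAtOne_eq_of_forall_eq_sum hn e
    (fun j => (n.choose j : K) • φ (fun _ => e) + if j = 0 then φ (fun _ => 1 - e) else 0)
    (fun t => ?_) |>.trans (by simp)
  have horth₁ : ((t + 1) • e) * (1 - e) = 0 := by
    rw [smul_mul_assoc, mul_sub, mul_one, he.eq, sub_self, smul_zero]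
  have horth₂ : (1 - e) * ((t + 1) • e) = 0 := by
    rw [mul_smul_comm, sub_mul, one_mul, he.eq, sub_self, smul_zero]
  calc φ (fun _ => t • e + 1) = φ (fun _ => (t + 1) • e + (1 - e)) := by
        congr 1; ext; rw [add_smul, one_smul]; abel
    _ = (t + 1) ^ n • φ (fun _ => e) + φ (fun _ => 1 - e) := by
        rw [← map_diag_smul]
        exact hφ _ _ horth₁ horth₂
    _ = _ := by
        simp [add_pow, sum_smul, smul_add, sum_add_distrib, mul_smul]

theorem smul_eq_derivAtOne_of_map_pow [CharZero K] (hn : 0 < n) (Φ : A →ₗ[K] V)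
    (hΦ : ∀ a, Φ (a ^ n) = φ fun _ => a) (a : A) : (n : K) • Φ a = φ.derivAtOne a := by
  refine (φ.derivAtOne_eq_of_forall_eq_sum hn a (fun j => (n.choose j : K) • Φ (a ^ j))
    (fun t => ?_) |>.trans (by simp)).symm
  rw [← hΦ, (Commute.one_right (t • a)).add_pow, _root_.map_sum]
  refine sum_congr rfl fun j _ => ?_
  rw [one_pow, mul_one, _root_.smul_pow, smul_mul_assoc, ← nsmul_eq_mul', LinearMap.map_smul,
    map_nsmul, Nat.cast_smul_eq_nsmul]

theorem smul_map_diag_sum_eq_derivAtOne_pow [CharZero K]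
    (hφ : OrthogonallyAdditive fun a : A => φ fun _ => a) (hn : 0 < n) {ι : Type*} [Fintype ι]
    {e : ι → A} (he : OrthogonalIdempotents e) (c : ι → K) :
    (n : K) • φ (fun _ => ∑ i, c i • e i) = φ.derivAtOne ((∑ i, c i • e i) ^ n) := by
  have horth : ((univ : Finset ι) : Set ι).Pairwise fun i j => (c i • e i) * (c j • e j) = 0 :=
    fun i _ j _ hij => show _ = _ by rw [smul_mul_smul_comm, he.ortho hij, smul_zero]
  rw [he.sum_smul_pow c hn.ne', hφ.map_sum _ _ horth, _root_.map_sum, smul_sum]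
  refine sum_congr rfl fun i _ => ?_
  rw [map_diag_smul, map_smul, derivAtOne_eq_smul_of_isIdempotentElem φ hφ hn (he.idem i),
    smul_comm]

theorem smul_map_diag_eq_derivAtOne_pow_of_aeval_eq_zero [CharZero K] [IsAlgClosed K]
    (hφ : OrthogonallyAdditive fun a : A => φ fun _ => a) (hn : 0 < n) {p : K[X]}
    (hp : p.Separable) {x : A} (hx : aeval x p = 0) :
    (n : K) • φ (fun _ => x) = φ.derivAtOne (x ^ n) := by
  classical
  obtain ⟨e, he, rfl⟩ :=
    exists_orthogonalIdempotents_of_aeval_nodal_eq_zero (hp.aeval_nodal_roots_eq_zero hx)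
  exact φ.smul_map_diag_sum_eq_derivAtOne_pow hφ hn he _

end Algebra

end MultilinearMap

theorem Polynomial.resultant_derivative_ne_zero_iff {K : Type*} [Field K] {f : K[X]}
    (hf : f ≠ 0) : f.resultant (derivative f) ≠ 0 ↔ f.Separable := by
  simp [resultant_eq_zero_iff, hf, Separable]

theorem Matrix.finite_setOf_not_separable_charpoly_add_smul {K ι : Type*} [Field K] [CharZero K]
    [Fintype ι] [DecidableEq ι] (A B : Matrix ι ι K) {c₀ : K}
    (h₀ : (A + c₀ • B).charpoly.Separable) :
    {c : K | ¬ (A + c • B).charpoly.Separable}.Finite := by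
  let L : Matrix ι ι K[X] := A.map C + (X : K[X]) • B.map C
  let χ := L.charpoly
  -- `D.eval c` is, up to sign, the discriminant of `(A + c • B).charpoly`: the sizes are the
  -- degrees of every specialization of `χ` and of its derivative.
  let D : K[X] := resultant χ (derivative χ) (Fintype.card ι) (Fintype.card ι - 1)
  have hD (c : K) : D.eval c ≠ 0 ↔ (A + c • B).charpoly.Separable := by
    have hL : L.map (evalRingHom c) = A + c • B := by ext; simp [L, mul_comm (B _ _)]
    have hχ : (A + c • B).charpoly = χ.map (evalRingHom c) := by rw [← hL, charpoly_map]
    have hdeg : (A + c • B).charpoly.natDegree = Fintype.card ι := charpoly_natDegree_eq_dim _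
    rw [← coe_evalRingHom, ← resultant_map_map, ← derivative_map, ← hχ, ← hdeg,
      ← natDegree_derivative]
    exact resultant_derivative_ne_zero_iff (charpoly_monic _).ne_zero
  have hD0 : D ≠ 0 := fun h => (hD c₀).mpr h₀ (by simp [h])
  exact (finite_setOfPred_isRoot hD0).subset fun c hc => by_contra fun h => hc ((hD c).mp h)

theorem Matrix.exists_finite_setOf_not_separable_charpoly_add_smul {K : Type*} [Field K]
    [CharZero K] {k : ℕ} (A : Matrix (Fin k) (Fin k) K) :
    ∃ B : Matrix (Fin k) (Fin k) K, {c : K | ¬ (A + c • B).charpoly.Separable}.Finite := by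
  let d (i : Fin k) : K := (i : ℕ)
  have hd : Function.Injective d := Nat.cast_injective.comp Fin.val_injective
  refine ⟨diagonal d - A, finite_setOf_not_separable_charpoly_add_smul A _ (c₀ := 1) ?_⟩
  rw [one_smul, add_sub_cancel, charpoly_diagonal]
  exact separable_prod_X_sub_C_iff.mpr hd

theorem MultilinearMap.smul_map_diag_eq_derivAtOne_pow {K A V : Type*} [Field K] [CharZero K]
    [IsAlgClosed K] [Ring A] [Algebra K A] [AddCommGroup V] [Module K V] {n : ℕ}
    (φ : MultilinearMap K (fun _ : Fin n => A) V)
    (hφ : OrthogonallyAdditive fun a : A => φ fun _ => a) (hn : 0 < n) {k : ℕ}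
    (g : A ≃ₐ[K] Matrix (Fin k) (Fin k) K) (a : A) :
    (n : K) • φ (fun _ => a) = φ.derivAtOne (a ^ n) := by
  let ψ := (n : K) • φ - φ.derivAtOne.compMultilinearMap (MultilinearMap.mkPiAlgebraFin K n A)
  have hψ (x : A) : ψ (fun _ => x) = (n : K) • φ (fun _ => x) - φ.derivAtOne (x ^ n) := by
    simp [ψ, List.ofFn_const, List.prod_replicate]
  obtain ⟨B, hB⟩ := (g a).exists_finite_setOf_not_separable_charpoly_add_smul
  rw [← sub_eq_zero, ← hψ]
  refine ψ.map_diag_eq_zero_of_forall_mem hB.infinite_compl (b := g.symm B) fun t ht => ?_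
  have hx : aeval (t • g.symm B + a) (g a + t • B).charpoly = 0 := by
    rw [show t • g.symm B + a = g.symm (g a + t • B) by simp [add_comm], aeval_algHom_apply,
      Matrix.aeval_self_charpoly, _root_.map_zero]
  rw [hψ, sub_eq_zero]
  exact φ.smul_map_diag_eq_derivAtOne_pow_of_aeval_eq_zero hφ hn (not_not.mp ht) hx

theorem statement0 (n : ℕ) (hn : 2 ≤ n)
    (M : Type*) [Ring M] [Algebra ℂ M]
    (hM : ∃ k : ℕ, Nonempty (M ≃ₐ[ℂ] Matrix (Fin k) (Fin k) ℂ))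
    (X : Type*) [AddCommGroup X] [Module ℂ X]
    (P : M → X)
    -- `P` is an n-homogeneous polynomial:
    (hP : ∃ φ : MultilinearMap ℂ (fun _ : Fin n => M) X, ∀ a : M, P a = φ fun _ => a)
    -- `P` is orthogonally additive:
    (hoa : ∀ a b : M, a * b = 0 → b * a = 0 → P (a + b) = P a + P b) :
    (∃! Φ : M →ₗ[ℂ] X, ∀ a : M, P a = Φ (a ^ n)) ∧
    -- moreover, if `φ` is the symmetric n-linear map associated with `P`, then any
    -- representing `Φ` is given by `Φ(a) = φ(a, e, …, e)` where `e = 1`: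
    (∀ φ : MultilinearMap ℂ (fun _ : Fin n => M) X,
      (∀ (v : Fin n → M) (σ : Equiv.Perm (Fin n)), φ (fun i => v (σ i)) = φ v) →
      (∀ a : M, P a = φ fun _ => a) →
      ∀ Φ : M →ₗ[ℂ] X, (∀ a : M, P a = Φ (a ^ n)) →
        ∀ a : M, Φ a = φ (fun i => if (i : ℕ) = 0 then a else 1)) := by
  have hn₀ : 0 < n := by omega
  have hn' : (n : ℂ) ≠ 0 := by exact_mod_cast hn₀.ne'
  obtain ⟨k, ⟨g⟩⟩ := hM
  obtain ⟨φ, rfl⟩ : ∃ φ : MultilinearMap ℂ (fun _ : Fin n => M) X, P = fun a => φ fun _ => a :=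
    hP.imp fun φ hφ => funext hφ
  refine ⟨⟨(n : ℂ)⁻¹ • φ.derivAtOne, fun a => ?_, fun Φ hΦ => ?_⟩, fun ψ hψ hψP Φ hΦ a => ?_⟩
  · simp [← φ.smul_map_diag_eq_derivAtOne_pow hoa hn₀ g a, smul_smul, inv_mul_cancel₀ hn']
  · ext a
    simp [← φ.smul_eq_derivAtOne_of_map_pow hn₀ Φ (fun b => (hΦ b).symm) a, smul_smul,
      inv_mul_cancel₀ hn']
  · have h := ψ.smul_eq_derivAtOne_of_map_pow hn₀ Φ (fun b => (hΦ b).symm.trans (hψP b)) a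
    rw [ψ.derivAtOne_eq_of_symmetric hψ ⟨0, hn₀⟩] at h
    rw [smul_right_injective X hn' h]
    congr 1
    ext i
    simp [Function.update, Fin.ext_iff]
end

section
/- The map P : L^∞(𝕋) → ℂ defined by P(f) = Σ_{k=0}^{∞} f̂(−k)² is a well-defined, orthogonally additive, continuous 2-homogeneous polynomial on the convolution algebra L^∞(𝕋), and neither P nor the restriction of P to C(𝕋) can be expressed in the form P(f) = Φ(f ∗ f) for any continuous linear functional Φ (on L^∞(𝕋), respectively on C(𝕋)). -/
/-!
`P f = φ f f` for the bilinear form `φ f g = ∑_{k ≥ 0} f̂(-k) ĝ(-k)`, which is bounded on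
`L^∞(𝕋) ⊆ L²(𝕋)` by Cauchy–Schwarz and Parseval. As `(f ∗ g)^ = f̂ ĝ`, the cross terms of
`P (f + g)` vanish when `f ∗ g = 0`.

If `P f = Φ (f ∗ f)`, then `e_m ∗ e_m = e_m` forces `Φ e_m = [m ≤ 0]`, so `Φ` would be a bounded
Riesz projection on `C(𝕋)`. But the sawtooth polynomials `∑_{k ≤ N} (e_{-k} - e_k) / k` are
uniformly bounded, while `Φ` maps them to the harmonic numbers.
-/

noncomputable section

open MeasureTheory

instance : Fact ((1 : ENNReal) ≤ ⊤) := ⟨le_top⟩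

/-- Convolution on the circle group `𝕋 = AddCircle 1` (normalized Haar measure). -/
def tconv (f g : AddCircle (1 : ℝ) → ℂ) : AddCircle (1 : ℝ) → ℂ :=
  fun x => ∫ y, f y * g (x - y) ∂(@AddCircle.haarAddCircle 1 _)

namespace MeasureTheory.Lp

variable {α E 𝕜 : Type*} [MeasurableSpace α] {μ : Measure α} [IsProbabilityMeasure μ]
  [NormedAddCommGroup E] [NormedField 𝕜] [NormedSpace 𝕜 E]
  {p q : ENNReal} [Fact (1 ≤ p)] [Fact (1 ≤ q)]

def inclusionOfExponentLe (hpq : p ≤ q) : Lp E q μ →L[𝕜] Lp E p μ :=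
  LinearMap.mkContinuous
    { toFun := fun f => ((Lp.memLp f).mono_exponent hpq).toLp f
      map_add' := fun f g => by
        rw [← MemLp.toLp_add, MemLp.toLp_congr _ _ (Lp.coeFn_add f g)]
      map_smul' := fun c f => by
        rw [RingHom.id_apply, ← MemLp.toLp_const_smul, MemLp.toLp_congr _ _ (Lp.coeFn_smul c f)] }
    1 fun f => by
      rw [LinearMap.coe_mk, AddHom.coe_mk, one_mul, Lp.norm_toLp, Lp.norm_def]
      exact ENNReal.toReal_mono (Lp.eLpNorm_ne_top f)
        (eLpNorm_le_eLpNorm_of_exponent_le hpq (Lp.aestronglyMeasurable f))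

theorem coeFn_inclusionOfExponentLe (hpq : p ≤ q) (f : Lp E q μ) :
    ⇑(inclusionOfExponentLe (𝕜 := 𝕜) hpq f) =ᵐ[μ] f :=
  MemLp.coeFn_toLp ((Lp.memLp f).mono_exponent hpq)

end MeasureTheory.Lp

namespace lp

variable {ι κ : Type*} {e : κ → ι}

theorem summable_norm_mul_comp (he : Function.Injective e) (a b : lp (fun _ : ι => ℂ) 2) :
    Summable fun k => ‖a (e k) * b (e k)‖ := by
  simpa only [norm_mul, Function.comp_def] using
    (lp.summable_mul (by norm_num [Real.HolderConjugate.two_two]) a b).comp_injective he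

theorem norm_tsum_mul_comp_le (he : Function.Injective e) (a b : lp (fun _ : ι => ℂ) 2) :
    ‖∑' k, a (e k) * b (e k)‖ ≤ ‖a‖ * ‖b‖ := calc
  _ ≤ ∑' k, ‖a (e k)‖ * ‖b (e k)‖ := by
    simpa only [norm_mul] using norm_tsum_le_tsum_norm (summable_norm_mul_comp he a b)
  _ ≤ ∑' i, ‖a i‖ * ‖b i‖ :=
    tsum_comp_le_tsum_of_inj (lp.summable_mul (by norm_num [Real.HolderConjugate.two_two]) a b)
      (fun _ => by positivity) he
  _ ≤ ‖a‖ * ‖b‖ := lp.tsum_mul_le_mul_norm' (by norm_num [Real.HolderConjugate.two_two]) a b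

def pairingAlong (he : Function.Injective e) :
    lp (fun _ : ι => ℂ) 2 →L[ℂ] lp (fun _ : ι => ℂ) 2 →L[ℂ] ℂ :=
  LinearMap.mkContinuous₂
    (LinearMap.mk₂ ℂ (fun a b => ∑' k, a (e k) * b (e k))
      (fun a a' b => by
        simp only [lp.coeFn_add, Pi.add_apply, add_mul]
        exact (summable_norm_mul_comp he a b).of_norm.tsum_add
          (summable_norm_mul_comp he a' b).of_norm)
      (fun c a b => by
        simp only [lp.coeFn_smul, Pi.smul_apply, smul_eq_mul, mul_assoc]
        exact tsum_mul_left)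
      (fun a b b' => by
        simp only [lp.coeFn_add, Pi.add_apply, mul_add]
        exact (summable_norm_mul_comp he a b).of_norm.tsum_add
          (summable_norm_mul_comp he a b').of_norm)
      (fun c a b => by
        simp only [lp.coeFn_smul, Pi.smul_apply, smul_eq_mul, mul_left_comm _ c]
        exact tsum_mul_left))
    1 fun a b => by rw [one_mul]; exact norm_tsum_mul_comp_le he a b

theorem pairingAlong_apply (he : Function.Injective e) (a b : lp (fun _ : ι => ℂ) 2) :
    pairingAlong he a b = ∑' k, a (e k) * b (e k) := rfl

end lp

section FourierConvolution

open scoped Convolution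

variable {T : ℝ}

theorem fourier_apply_add (n : ℤ) (x y : AddCircle T) :
    fourier n (x + y) = fourier n x * fourier n y := by
  simp only [fourier_apply, smul_add, AddCircle.toCircle_add, Circle.coe_mul]

variable [Fact (0 < T)]

theorem fourierCoeff_convolution {f g : AddCircle T → ℂ}
    (hf : Integrable f AddCircle.haarAddCircle) (hg : Integrable g AddCircle.haarAddCircle)
    (n : ℤ) :
    fourierCoeff (f ⋆[ContinuousLinearMap.mul ℂ ℂ, AddCircle.haarAddCircle] g) n =
      fourierCoeff f n * fourierCoeff g n := by
  have twist : ∀ x, fourier (-n) x • (f ⋆[ContinuousLinearMap.mul ℂ ℂ, AddCircle.haarAddCircle] g) x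
      = ((fun t => fourier (-n) t • f t) ⋆[ContinuousLinearMap.mul ℂ ℂ, AddCircle.haarAddCircle]
          (fun t => fourier (-n) t • g t)) x := fun x => by
    simp only [convolution_def, ContinuousLinearMap.mul_apply', smul_eq_mul, ← integral_const_mul]
    congr 1 with y
    rw [← sub_add_cancel x y, fourier_apply_add, add_sub_cancel_right]
    ring
  simp_rw [fourierCoeff, twist]
  exact integral_convolution _ (hf.fourier_smul _) (hg.fourier_smul _)

theorem fourier_convolution_self (n : ℤ) :
    (fourier n : AddCircle T → ℂ) ⋆[ContinuousLinearMap.mul ℂ ℂ, AddCircle.haarAddCircle]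
      fourier n = fourier n := by
  ext x
  simp only [convolution_def, ContinuousLinearMap.mul_apply', ← fourier_apply_add,
    add_sub_cancel, integral_const, probReal_univ, one_smul]

end FourierConvolution

section FourierPairing

variable {T : ℝ} [Fact (0 < T)] {p : ENNReal} [Fact (1 ≤ p)]

def fourierCoeffCLM (hp : 2 ≤ p) :
    Lp ℂ p (@AddCircle.haarAddCircle T _) →L[ℂ] lp (fun _ : ℤ => ℂ) 2 :=
  fourierBasis.repr.toContinuousLinearEquiv.toContinuousLinearMap.comp
    (Lp.inclusionOfExponentLe hp)

theorem fourierCoeffCLM_apply (hp : 2 ≤ p) (f : Lp ℂ p (@AddCircle.haarAddCircle T _)) (n : ℤ) :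
    fourierCoeffCLM hp f n = fourierCoeff f n := by
  change fourierBasis.repr (Lp.inclusionOfExponentLe hp f) n = _
  rw [fourierBasis_repr, fourierCoeff_congr_ae (Lp.coeFn_inclusionOfExponentLe hp f)]

theorem neg_natCast_injective : Function.Injective fun k : ℕ => -(k : ℤ) :=
  neg_injective.comp Nat.cast_injective

def fourierPairing (hp : 2 ≤ p) :
    Lp ℂ p (@AddCircle.haarAddCircle T _) →L[ℂ] Lp ℂ p (@AddCircle.haarAddCircle T _) →L[ℂ] ℂ :=
  (lp.pairingAlong neg_natCast_injective).bilinearComp (fourierCoeffCLM hp) (fourierCoeffCLM hp)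

theorem fourierPairing_apply (hp : 2 ≤ p) (f g : Lp ℂ p (@AddCircle.haarAddCircle T _)) :
    fourierPairing hp f g = ∑' k : ℕ, fourierCoeff f (-k) * fourierCoeff g (-k) := by
  simp only [fourierPairing, ContinuousLinearMap.bilinearComp_apply, lp.pairingAlong_apply,
    fourierCoeffCLM_apply]

theorem summable_norm_fourierCoeff_neg_mul (hp : 2 ≤ p)
    (f g : Lp ℂ p (@AddCircle.haarAddCircle T _)) :
    Summable fun k : ℕ => ‖fourierCoeff f (-k) * fourierCoeff g (-k)‖ := by
  simpa only [fourierCoeffCLM_apply, norm_mul] using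
    lp.summable_norm_mul_comp neg_natCast_injective (fourierCoeffCLM hp f) (fourierCoeffCLM hp g)

theorem fourierPairing_add_self_of_fourierCoeff_mul_eq_zero (hp : 2 ≤ p)
    {f g : Lp ℂ p (@AddCircle.haarAddCircle T _)}
    (h : ∀ n, fourierCoeff f n * fourierCoeff g n = 0) :
    fourierPairing hp (f + g) (f + g) = fourierPairing hp f f + fourierPairing hp g g := by
  have hfg : fourierPairing hp f g = 0 := by simp only [fourierPairing_apply, h, tsum_zero]
  have hgf : fourierPairing hp g f = 0 := by
    simp only [fourierPairing_apply, mul_comm, h, tsum_zero]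
  simp only [map_add, FunLike.coe_add, Pi.add_apply, hfg, hgf, add_zero, zero_add]

end FourierPairing

section AbelSummation

open Finset

variable {E : Type*} [SeminormedAddCommGroup E] [NormedSpace ℝ E] {f : ℕ → ℝ} {g : ℕ → E} {C : ℝ}

theorem norm_sum_range_smul_le_of_antitone (hf : Antitone f) (hf0 : ∀ i, 0 ≤ f i)
    (hg : ∀ j, ‖∑ i ∈ range j, g i‖ ≤ C) (n : ℕ) :
    ‖∑ i ∈ range n, f i • g i‖ ≤ f 0 * C := by
  have hstep : ∀ i, ‖(f (i + 1) - f i) • ∑ j ∈ range (i + 1), g j‖ ≤ (f i - f (i + 1)) * C :=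
    fun i => by
      rw [norm_smul, Real.norm_eq_abs, abs_sub_comm, abs_of_nonneg (sub_nonneg.2 (hf i.le_succ))]
      exact mul_le_mul_of_nonneg_left (hg _) (sub_nonneg.2 (hf i.le_succ))
  rw [sum_range_by_parts]
  calc _ ≤ ‖f (n - 1) • ∑ i ∈ range n, g i‖
        + ∑ i ∈ range (n - 1), ‖(f (i + 1) - f i) • ∑ j ∈ range (i + 1), g j‖ :=
        (norm_sub_le _ _).trans (add_le_add_right (norm_sum_le _ _) _)
    _ ≤ f (n - 1) * C + ∑ i ∈ range (n - 1), (f i - f (i + 1)) * C := by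
        rw [norm_smul, Real.norm_of_nonneg (hf0 _)]
        exact add_le_add (mul_le_mul_of_nonneg_left (hg n) (hf0 _)) (sum_le_sum fun i _ => hstep i)
    _ = f 0 * C := by rw [← sum_mul, sum_range_sub']; ring

theorem norm_sum_Ico_smul_le_of_antitone (hf : Antitone f) (hf0 : ∀ i, 0 ≤ f i)
    (hg : ∀ j, ‖∑ i ∈ range j, g i‖ ≤ C) (m n : ℕ) :
    ‖∑ i ∈ Ico m n, f i • g i‖ ≤ 2 * f m * C := by
  have hshift : ∀ j, ‖∑ i ∈ range j, g (m + i)‖ ≤ 2 * C := fun j => by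
    rw [← sum_range_add_sub_sum_range]
    exact (norm_sub_le _ _).trans (by linarith [hg (m + j), hg m])
  rw [sum_Ico_eq_sum_range, mul_assoc, mul_left_comm]
  exact norm_sum_range_smul_le_of_antitone (fun i j hij => hf (by omega)) (fun i => hf0 _) hshift _

end AbelSummation

section ConjugateSeries

open Finset

variable {z : ℂ}

theorem norm_pow_sub_one_le (hz : ‖z‖ ≤ 1) (k : ℕ) : ‖z ^ k - 1‖ ≤ k * ‖z - 1‖ := by
  induction k with
  | zero => simp
  | succ k ih =>
    calc ‖z ^ (k + 1) - 1‖ = ‖z * (z ^ k - 1) + (z - 1)‖ := by ring_nf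
      _ ≤ ‖z‖ * ‖z ^ k - 1‖ + ‖z - 1‖ := (norm_add_le _ _).trans_eq (by rw [norm_mul])
      _ ≤ 1 * (k * ‖z - 1‖) + ‖z - 1‖ := by gcongr
      _ = (k + 1 : ℕ) * ‖z - 1‖ := by push_cast; ring

theorem norm_sum_range_pow_succ_le (hz : ‖z‖ ≤ 1) (hz1 : z ≠ 1) (j : ℕ) :
    ‖∑ i ∈ range j, z ^ (i + 1)‖ ≤ 2 / ‖z - 1‖ := by
  have hsum : ∑ i ∈ range j, z ^ (i + 1) = z * (z ^ j - 1) / (z - 1) := by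
    simp_rw [pow_succ', ← mul_sum, geom_sum_eq hz1, mul_div_assoc]
  have hnum : ‖z * (z ^ j - 1)‖ ≤ 2 := calc
    ‖z * (z ^ j - 1)‖ ≤ 1 * (1 + 1) := by
      rw [norm_mul]
      gcongr
      exact (norm_sub_le _ _).trans (by simpa using pow_le_one₀ (norm_nonneg z) hz)
    _ = 2 := by norm_num
  rw [hsum, norm_div]
  gcongr

/- Split at `M ≈ 1 / ‖z - 1‖`: below `M` each term is small since `|Im z^k| ≤ k ‖z - 1‖`, and
above `M` Abel summation against the geometric sums `O(1 / ‖z - 1‖)` gains the factor `1 / M`. -/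
theorem abs_im_sum_range_inv_smul_pow_succ_le (hz : ‖z‖ ≤ 1) (N : ℕ) :
    |(∑ n ∈ range N, ((n : ℝ) + 1)⁻¹ • z ^ (n + 1)).im| ≤ 5 := by
  rcases eq_or_ne z 1 with rfl | hz1
  · simp
  set d := ‖z - 1‖
  have hd : 0 < d := norm_pos_iff.2 (sub_ne_zero.2 hz1)
  set M := ⌊d⁻¹⌋₊
  have hsplit : ∑ n ∈ range N, ((n : ℝ) + 1)⁻¹ • z ^ (n + 1) =
      ∑ n ∈ range (min N M), ((n : ℝ) + 1)⁻¹ • z ^ (n + 1)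
        + ∑ n ∈ Ico M N, ((n : ℝ) + 1)⁻¹ • z ^ (n + 1) := by
    rcases le_total N M with hNM | hMN
    · simp [hNM]
    · rw [min_eq_right hMN, sum_range_add_sum_Ico _ hMN]
  have hhead : |(∑ n ∈ range (min N M), ((n : ℝ) + 1)⁻¹ • z ^ (n + 1)).im| ≤ 1 := calc
    _ ≤ ∑ n ∈ range (min N M), d := by
      rw [Complex.im_sum]
      refine (abs_sum_le_sum_abs _ _).trans (sum_le_sum fun n _ => ?_)
      have hn : (0 : ℝ) < n + 1 := by positivity
      rw [Complex.smul_im, smul_eq_mul, abs_mul, abs_of_pos (inv_pos.2 hn), inv_mul_le_iff₀ hn]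
      calc |(z ^ (n + 1)).im| = |(z ^ (n + 1) - 1).im| := by simp
        _ ≤ ‖z ^ (n + 1) - 1‖ := Complex.abs_im_le_norm _
        _ ≤ (n + 1 : ℕ) * d := norm_pow_sub_one_le hz _
        _ = (n + 1) * d := by push_cast; ring
    _ ≤ M * d := by
      rw [sum_const, card_range, nsmul_eq_mul]
      gcongr
      exact_mod_cast min_le_right N M
    _ ≤ 1 := by
      rw [← le_div_iff₀ hd, one_div]
      exact Nat.floor_le (by positivity)
  have htail : ‖∑ n ∈ Ico M N, ((n : ℝ) + 1)⁻¹ • z ^ (n + 1)‖ ≤ 4 := calc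
    _ ≤ 2 * ((M : ℝ) + 1)⁻¹ * (2 / d) :=
      norm_sum_Ico_smul_le_of_antitone (fun i j hij => by gcongr) (fun i => by positivity)
        (norm_sum_range_pow_succ_le hz hz1) M N
    _ ≤ 4 := by
      have := Nat.lt_floor_add_one d⁻¹
      rw [show 2 * ((M : ℝ) + 1)⁻¹ * (2 / d) = 4 * (d⁻¹ / (M + 1)) by ring]
      have : d⁻¹ / (M + 1) ≤ 1 := (div_le_one (by positivity)).2 this.le
      linarith
  rw [hsplit, Complex.add_im]
  linarith [abs_add_le (∑ n ∈ range (min N M), ((n : ℝ) + 1)⁻¹ • z ^ (n + 1)).im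
    (∑ n ∈ Ico M N, ((n : ℝ) + 1)⁻¹ • z ^ (n + 1)).im,
    Complex.abs_im_le_norm (∑ n ∈ Ico M N, ((n : ℝ) + 1)⁻¹ • z ^ (n + 1))]

end ConjugateSeries

section RieszProjection

open Finset ComplexConjugate

variable {T : ℝ}

theorem fourier_natCast_apply (k : ℕ) (x : AddCircle T) : fourier k x = fourier 1 x ^ k := by
  induction k with
  | zero => simp
  | succ k ih => rw [Nat.cast_succ, fourier_add, ih, pow_succ]

variable [Fact (0 < T)]

/-- `-2i ∑_{k ≤ N} sin (2πkx/T) / k`, a partial Fourier sum of a sawtooth wave. -/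
def sawtoothPoly (N : ℕ) : C(AddCircle T, ℂ) :=
  ∑ n ∈ range N, ((n : ℂ) + 1)⁻¹ • (fourier (-(n + 1 : ℕ) : ℤ) - fourier ((n + 1 : ℕ) : ℤ))

theorem norm_sawtoothPoly_le (N : ℕ) : ‖(sawtoothPoly N : C(AddCircle T, ℂ))‖ ≤ 10 := by
  refine (ContinuousMap.norm_le _ (by norm_num)).2 fun x => ?_
  set S := ∑ n ∈ range N, ((n : ℝ) + 1)⁻¹ • fourier 1 x ^ (n + 1)
  have hS : sawtoothPoly N x = conj S - S := by
    simp only [sawtoothPoly, S, ContinuousMap.sum_apply, ContinuousMap.smul_apply,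
      ContinuousMap.sub_apply, fourier_neg, fourier_natCast_apply, map_sum, ← sum_sub_distrib]
    refine sum_congr rfl fun n _ => ?_
    simp [Complex.real_smul, mul_sub, smul_eq_mul]
  have hbound := abs_im_sum_range_inv_smul_pow_succ_le (Circle.norm_coe _).le N (z := fourier 1 x)
  rw [hS, norm_sub_rev, Complex.sub_conj, norm_mul, Complex.norm_I, mul_one, Complex.norm_real,
    Real.norm_eq_abs, abs_mul, abs_two]
  linarith

theorem not_forall_apply_fourier_eq_ite_nonpos (Ψ : C(AddCircle T, ℂ) →L[ℂ] ℂ) :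
    ¬ ∀ m : ℤ, Ψ (fourier m) = if m ≤ 0 then 1 else 0 := by
  intro hΨ
  have hterm : ∀ n : ℕ, Ψ (fourier (-(n + 1 : ℕ) : ℤ) - fourier ((n + 1 : ℕ) : ℤ)) = 1 :=
    fun n => by rw [map_sub, hΨ, hΨ, if_pos (by omega), if_neg (by omega), sub_zero]
  have hharmonic : ∀ N, ‖Ψ (sawtoothPoly N)‖ = ∑ n ∈ range N, 1 / ((n : ℝ) + 1) := fun N => by
    simp only [sawtoothPoly, map_sum, map_smul, hterm, smul_eq_mul, mul_one]
    rw [← Real.norm_of_nonneg (sum_nonneg fun n _ => by positivity : (0 : ℝ) ≤ _),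
      ← Complex.norm_real]
    push_cast
    simp only [one_div]
  obtain ⟨N, hN⟩ := (Real.tendsto_sum_range_one_div_nat_succ_atTop.eventually_gt_atTop
    (‖Ψ‖ * 10)).exists
  rw [← hharmonic] at hN
  exact hN.not_ge ((Ψ.le_opNorm _).trans (by gcongr; exact norm_sawtoothPoly_le N))

theorem tsum_fourierCoeff_fourier_neg_sq (m : ℤ) :
    ∑' k : ℕ, fourierCoeff (fourier m : AddCircle T → ℂ) (-k) ^ 2 = if m ≤ 0 then 1 else 0 := by
  simp only [fourierCoeff_fourier, Pi.single_apply, ite_pow, one_pow, zero_pow two_ne_zero]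
  split_ifs with hm
  · rw [tsum_eq_single m.natAbs fun k hk => if_neg (by omega)]
    exact if_pos (by omega)
  · simp only [show ∀ k : ℕ, -(k : ℤ) ≠ m from fun k => by omega, if_false, tsum_zero]

end RieszProjection

open scoped Convolution in
theorem tconv_eq_convolution (f g : AddCircle (1 : ℝ) → ℂ) :
    tconv f g = f ⋆[ContinuousLinearMap.mul ℂ ℂ, AddCircle.haarAddCircle] g :=
  rfl

theorem fourierCoeff_mul_eq_zero_of_tconv_ae_eq_zero {f g : AddCircle (1 : ℝ) → ℂ}
    (hf : Integrable f AddCircle.haarAddCircle) (hg : Integrable g AddCircle.haarAddCircle)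
    (h : tconv f g =ᵐ[AddCircle.haarAddCircle] 0) (n : ℤ) :
    fourierCoeff f n * fourierCoeff g n = 0 := by
  rw [← fourierCoeff_convolution hf hg, ← tconv_eq_convolution f g, fourierCoeff_congr_ae h]
  simp [fourierCoeff]

theorem statement5
    (P : Lp ℂ ⊤ (@AddCircle.haarAddCircle 1 _) → ℂ)
    (hPdef : ∀ f : Lp ℂ ⊤ (@AddCircle.haarAddCircle 1 _),
      P f = ∑' k : ℕ, (fourierCoeff (⇑f) (-(k : ℤ))) ^ 2)
    -- the restriction of `P` to `C(𝕋)`: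
    (Pc : C(AddCircle (1 : ℝ), ℂ) → ℂ)
    (hPcdef : ∀ f : C(AddCircle (1 : ℝ), ℂ),
      Pc f = ∑' k : ℕ, (fourierCoeff (⇑f) (-(k : ℤ))) ^ 2) :
    -- `P` is well defined:
    (∀ f : Lp ℂ ⊤ (@AddCircle.haarAddCircle 1 _),
      Summable (fun k : ℕ => ‖(fourierCoeff (⇑f) (-(k : ℤ))) ^ 2‖)) ∧
    -- `P` is a continuous 2-homogeneous polynomial:
    (∃ φ : Lp ℂ ⊤ (@AddCircle.haarAddCircle 1 _) →L[ℂ]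
        Lp ℂ ⊤ (@AddCircle.haarAddCircle 1 _) →L[ℂ] ℂ,
      ∀ f, P f = φ f f) ∧
    -- `P` is orthogonally additive (w.r.t. the convolution product):
    (∀ f g : Lp ℂ ⊤ (@AddCircle.haarAddCircle 1 _),
      tconv (⇑f) (⇑g) =ᵐ[@AddCircle.haarAddCircle 1 _] 0 →
      tconv (⇑g) (⇑f) =ᵐ[@AddCircle.haarAddCircle 1 _] 0 →
      P (f + g) = P f + P g) ∧
    -- `P` cannot be expressed as `Φ(f ∗ f)` on `L^∞(𝕋)`:
    (¬ ∃ Φ : Lp ℂ ⊤ (@AddCircle.haarAddCircle 1 _) →L[ℂ] ℂ,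
      ∀ f h : Lp ℂ ⊤ (@AddCircle.haarAddCircle 1 _),
        (⇑h =ᵐ[@AddCircle.haarAddCircle 1 _] tconv (⇑f) (⇑f)) → P f = Φ h) ∧
    -- nor can its restriction to `C(𝕋)`:
    (¬ ∃ Φ : C(AddCircle (1 : ℝ), ℂ) →L[ℂ] ℂ,
      ∀ f h : C(AddCircle (1 : ℝ), ℂ), ⇑h = tconv (⇑f) (⇑f) → Pc f = Φ h) := by
  have hP : ∀ f, P f = fourierPairing le_top f f := fun f => by
    simp only [hPdef, fourierPairing_apply, sq]
  refine ⟨fun f => ?_, ⟨fourierPairing le_top, hP⟩, fun f g hfg _ => ?_, ?_, ?_⟩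
  · simpa only [norm_pow, sq, norm_mul] using summable_norm_fourierCoeff_neg_mul le_top f f
  · rw [hP, hP, hP]
    exact fourierPairing_add_self_of_fourierCoeff_mul_eq_zero le_top
      (fourierCoeff_mul_eq_zero_of_tconv_ae_eq_zero ((Lp.memLp f).integrable le_top)
        ((Lp.memLp g).integrable le_top) hfg)
  · rintro ⟨Φ, hΦ⟩
    refine not_forall_apply_fourier_eq_ite_nonpos (Φ.comp (ContinuousMap.toLp ⊤ _ ℂ)) fun m => ?_
    let e := ContinuousMap.toLp (E := ℂ) ⊤ (@AddCircle.haarAddCircle 1 _) ℂ (fourier m)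
    have hcoe : ⇑e =ᵐ[AddCircle.haarAddCircle] fourier m := ContinuousMap.coeFn_toLp _ _
    have hidem : ⇑e =ᵐ[AddCircle.haarAddCircle] tconv e e := by
      rwa [tconv_eq_convolution, convolution_congr _ hcoe hcoe, fourier_convolution_self]
    rw [ContinuousLinearMap.comp_apply, ← hΦ _ _ hidem, hPdef, fourierCoeff_congr_ae hcoe,
      tsum_fourierCoeff_fourier_neg_sq]
  · rintro ⟨Φ, hΦ⟩
    refine not_forall_apply_fourier_eq_ite_nonpos Φ fun m => ?_
    rw [← hΦ _ _ (fourier_convolution_self m).symm, hPcdef, tsum_fourierCoeff_fourier_neg_sq]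

end
end

section
/- Fix an integer n ≥ 2 and let A be a Banach algebra. Suppose |||·||| is a norm on 𝒫ₙ(A) with the following two properties: (i) for each Banach space X and each |||·|||-continuous linear map Φ : 𝒫ₙ(A) → X, the polynomial P : A → X defined by P(a) = Φ(aⁿ) is continuous; (ii) every orthogonally additive continuous n-homogeneous polynomial P from A into any Banach space X can be expressed as P(a) = Φ(aⁿ) for some |||·|||-continuous linear map Φ : 𝒫ₙ(A) → X. Then there exist constants M₁, M₂ > 0 such that M₁‖a‖ ≤ |||a||| ≤ M₂‖a‖_{𝒫ₙ} for all a ∈ 𝒫ₙ(A). -/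
/-! Applying (ii) to the polynomial `a ↦ aⁿ` with values in `A` itself gives a `|||·|||`-bounded
linear map `𝒫ₙ(A) → A` that fixes every `aⁿ`, hence is the inclusion; its boundedness is the
lower estimate. For the upper one, complete `(𝒫ₙ(A), |||·|||)` to a Banach space and apply (i) to
the canonical map: `a ↦ |||aⁿ|||` is then continuous and `n`-homogeneous, so `|||aⁿ||| ≤ K‖a‖ⁿ`,
and the triangle inequality over any decomposition `x = ∑ aⱼⁿ` gives `|||x||| ≤ K‖x‖_{𝒫ₙ}`. -/

noncomputable section

universe u

/-- `npow1 mul a k = a^(k+1)` (products with respect to the multiplication `mul`). -/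
def npow1 {A : Type*} (mul : A → A → A) (a : A) : ℕ → A
  | 0 => a
  | k + 1 => mul a (npow1 mul a k)

/-- `npower mul a n = aⁿ` for `n ≥ 1` (junk value `a` for `n = 0`). -/
def npower {A : Type*} (mul : A → A → A) (a : A) (n : ℕ) : A :=
  npow1 mul a (n - 1)

/-- `𝒫ₙ(A)`: the linear span of the set of n-th powers of elements of `A`. -/
def PnSubmodule {A : Type*} [AddCommGroup A] [Module ℂ A] (mul : A → A → A) (n : ℕ) :
    Submodule ℂ A :=
  Submodule.span ℂ {x : A | ∃ a : A, x = npower mul a n}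

/-- The norm `‖·‖_{𝒫ₙ}` on `𝒫ₙ(A)`. -/
def PnNorm {A : Type*} [NormedAddCommGroup A] (mul : A → A → A) (n : ℕ) (a : A) : ℝ :=
  sInf {r : ℝ | ∃ (m : ℕ) (c : Fin m → A),
    a = ∑ j, npower mul (c j) n ∧ r = ∑ j, ‖c j‖ ^ n}

section Powers

variable {R A : Type*} [CommSemiring R] [NonUnitalSemiring A] [Module R A]
  [IsScalarTower R A A] [SMulCommClass R A A]

theorem npow1_smul (z : R) (a : A) :
    ∀ k, npow1 (· * ·) (z • a) k = z ^ (k + 1) • npow1 (· * ·) a k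
  | 0 => by simp [npow1]
  | k + 1 => by
    simp only [npow1, npow1_smul z a k, smul_mul_assoc, mul_smul_comm, smul_smul, ← pow_succ]

theorem npower_smul {n : ℕ} (hn : n ≠ 0) (z : R) (a : A) :
    npower (· * ·) (z • a) n = z ^ n • npower (· * ·) a n := by
  rw [npower, npower, npow1_smul, Nat.sub_add_cancel (Nat.one_le_iff_ne_zero.2 hn)]

theorem mul_npow1_eq_zero {a b : A} (h : a * b = 0) : ∀ k, a * npow1 (· * ·) b k = 0
  | 0 => h
  | k + 1 => by rw [npow1, ← mul_assoc, h, zero_mul]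

theorem npow1_add_of_mul_eq_zero {a b : A} (hab : a * b = 0) (hba : b * a = 0) :
    ∀ k, npow1 (· * ·) (a + b) k = npow1 (· * ·) a k + npow1 (· * ·) b k
  | 0 => rfl
  | k + 1 => by
    simp only [npow1, npow1_add_of_mul_eq_zero hab hba k, add_mul, mul_add,
      mul_npow1_eq_zero hab, mul_npow1_eq_zero hba, add_zero, zero_add]

theorem npower_add_of_mul_eq_zero {a b : A} (hab : a * b = 0) (hba : b * a = 0) (n : ℕ) :
    npower (· * ·) (a + b) n = npower (· * ·) a n + npower (· * ·) b n :=
  npow1_add_of_mul_eq_zero hab hba _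

end Powers

section PowerMultilinear

variable (𝕜 A : Type*) [NontriviallyNormedField 𝕜] [NonUnitalNormedRing A] [NormedSpace 𝕜 A]
  [IsScalarTower 𝕜 A A] [SMulCommClass 𝕜 A A]

def npow1Multilinear : (k : ℕ) → ContinuousMultilinearMap 𝕜 (fun _ : Fin (k + 1) => A) A
  | 0 => (continuousMultilinearCurryFin1 𝕜 A A).symm (ContinuousLinearMap.id 𝕜 A)
  | k + 1 =>
    ContinuousLinearMap.uncurryLeft (Ei := fun _ : Fin (k + 2) => A)
      (((ContinuousLinearMap.compContinuousMultilinearMapL 𝕜 (fun _ : Fin (k + 1) => A) A A).flip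
        (npow1Multilinear k)).comp (ContinuousLinearMap.mul 𝕜 A))

variable {𝕜 A}

theorem npow1Multilinear_apply_const (a : A) :
    ∀ k, npow1Multilinear 𝕜 A k (fun _ => a) = npow1 (· * ·) a k
  | 0 => rfl
  | k + 1 => by
    rw [npow1, ← npow1Multilinear_apply_const a k]
    rfl

variable (𝕜 A) in
theorem exists_continuousMultilinearMap_npower {n : ℕ} (hn : n ≠ 0) :
    ∃ φ : ContinuousMultilinearMap 𝕜 (fun _ : Fin n => A) A,
      ∀ a : A, npower (· * ·) a n = φ fun _ => a := by
  obtain ⟨k, rfl⟩ := Nat.exists_eq_succ_of_ne_zero hn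
  exact ⟨npow1Multilinear 𝕜 A k, fun a => (npow1Multilinear_apply_const a k).symm⟩

end PowerMultilinear

section Span

variable {A : Type*} [AddCommGroup A] [Module ℂ A]

def powPn (mul : A → A → A) (n : ℕ) (a : A) : PnSubmodule mul n :=
  ⟨npower mul a n, Submodule.subset_span ⟨a, rfl⟩⟩

theorem PnSubmodule.linearMap_eq_subtype {mul : A → A → A} {n : ℕ}
    {Φ : PnSubmodule mul n →ₗ[ℂ] A} (hΦ : ∀ a, npower mul a n = Φ (powPn mul n a)) :
    Φ = (PnSubmodule mul n).subtype :=
  LinearMap.ext_on Submodule.span_span_coe_preimage fun x ⟨a, ha⟩ => by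
    rw [show x = powPn mul n a from Subtype.ext ha, ← hΦ]
    rfl

end Span

section ComplexPowers

variable {A : Type*} [NonUnitalRing A] [Module ℂ A] [IsScalarTower ℂ A A] [SMulCommClass ℂ A A]
  {n : ℕ}

theorem powPn_smul (hn : n ≠ 0) (z : ℂ) (a : A) :
    powPn (· * ·) n (z • a) = z ^ n • powPn (· * ·) n a :=
  Subtype.ext (npower_smul hn z a)

theorem exists_sum_npower_of_mem_PnSubmodule (hn : n ≠ 0) {x : A}
    (hx : x ∈ PnSubmodule (· * ·) n) :
    ∃ (m : ℕ) (c : Fin m → A), x = ∑ j, npower (· * ·) (c j) n := by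
  obtain ⟨m, z, g, hsum⟩ := Submodule.mem_span_set'.1 hx
  choose a ha using fun j => (g j).2
  -- every complex scalar is an `n`-th power, so `z • aⁿ = (w • a)ⁿ`
  choose w hw using fun j => IsAlgClosed.exists_pow_nat_eq (z j) (Nat.pos_of_ne_zero hn)
  refine ⟨m, fun j => w j • a j, hsum.symm.trans (Finset.sum_congr rfl fun j _ => ?_)⟩
  rw [ha, npower_smul hn, hw]

end ComplexPowers

theorem Seminorm.exists_linearMap_norm_eq {𝕜 : Type*} [NormedField 𝕜] {E : Type u}
    [AddCommGroup E] [Module 𝕜 E] (p : Seminorm 𝕜 E) :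
    ∃ (X : Type u) (_ : NormedAddCommGroup X) (_ : NormedSpace 𝕜 X) (_ : CompleteSpace X)
      (Φ : E →ₗ[𝕜] X), ∀ x, ‖Φ x‖ = p x := by
  let _ : SeminormedAddCommGroup E := p.toAddGroupSeminorm.toSeminormedAddCommGroup
  let _ : NormedSpace 𝕜 E := ⟨fun z x => (map_smul_eq_mul p z x).le⟩
  exact ⟨_, inferInstance, inferInstance, inferInstance,
    (UniformSpace.Completion.toComplₗᵢ (𝕜 := 𝕜) (E := E)).toLinearMap,
    fun x => UniformSpace.Completion.norm_coe x⟩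

theorem exists_le_mul_norm_pow_of_continuousAt {𝕜 E : Type*} [RCLike 𝕜]
    [NormedAddCommGroup E] [NormedSpace 𝕜 E] {f : E → ℝ} {n : ℕ} (hn : n ≠ 0)
    (hf : ∀ (z : 𝕜) x, f (z • x) = ‖z‖ ^ n * f x) (hcont : ContinuousAt f 0) :
    ∃ K > 0, ∀ x, f x ≤ K * ‖x‖ ^ n := by
  have hf0 : f 0 = 0 := by simpa [zero_pow hn] using hf 0 0
  obtain ⟨δ, hδ, hsmall⟩ := Metric.continuousAt_iff.1 hcont 1 one_pos
  refine ⟨(2 / δ) ^ n, by positivity, fun x => ?_⟩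
  rcases eq_or_ne x 0 with rfl | hx
  · simp [hf0, zero_pow hn]
  have hx' : 0 < ‖x‖ := norm_pos_iff.2 hx
  set t := δ / (2 * ‖x‖) with ht
  have htpos : 0 < t := by positivity
  have hscaled : f ((t : 𝕜) • x) < 1 := by
    have hnorm : ‖(t : 𝕜) • x‖ < δ := by
      rw [norm_smul, RCLike.norm_ofReal, abs_of_pos htpos, ht, div_mul_eq_mul_div,
        mul_div_mul_right _ _ hx'.ne']
      linarith
    simpa [hf0] using (abs_lt.1 (hsmall (by simpa using hnorm))).2
  have hKt : (2 / δ) ^ n * ‖x‖ ^ n * t ^ n = 1 := by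
    rw [← mul_pow, ← mul_pow, ht]
    field_simp
    simp
  rw [hf, RCLike.norm_ofReal, abs_of_pos htpos] at hscaled
  nlinarith [pow_pos htpos n]

theorem Seminorm.le_mul_PnNorm {A : Type*} [NonUnitalNormedRing A] [NormedSpace ℂ A]
    [IsScalarTower ℂ A A] [SMulCommClass ℂ A A] {n : ℕ} (hn : n ≠ 0)
    (p : Seminorm ℂ (PnSubmodule (· * ·) n : Submodule ℂ A)) {K : ℝ} (hK : 0 < K)
    (hbound : ∀ a, p (powPn (· * ·) n a) ≤ K * ‖a‖ ^ n) (x : PnSubmodule (· * ·) n) :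
    p x ≤ K * PnNorm (· * ·) n (x : A) := by
  rw [← div_le_iff₀' hK]
  obtain ⟨m, c, hc⟩ := exists_sum_npower_of_mem_PnSubmodule hn x.2
  refine le_csInf ⟨_, m, c, hc, rfl⟩ ?_
  rintro r ⟨m, c, hc, rfl⟩
  have hx : x = ∑ j, powPn (· * ·) n (c j) := Subtype.ext (by simpa [powPn] using hc)
  rw [div_le_iff₀' hK, Finset.mul_sum, hx]
  calc p (∑ j, powPn (· * ·) n (c j)) ≤ ∑ j, p (powPn (· * ·) n (c j)) :=
        Finset.le_sum_of_subadditive p (map_zero p).le (map_add_le_add p) _ _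
    _ ≤ ∑ j, K * ‖c j‖ ^ n := Finset.sum_le_sum fun j _ => hbound (c j)

theorem statement8_general (n : ℕ) (hn : 2 ≤ n)
    (A : Type u) [NonUnitalNormedRing A] [NormedSpace ℂ A] [IsScalarTower ℂ A A]
    [SMulCommClass ℂ A A] [CompleteSpace A]
    -- `|||·|||` is a norm on `𝒫ₙ(A)`:
    (N : ↥(PnSubmodule (fun a b : A => a * b) n) → ℝ)
    (hNsmul : ∀ (z : ℂ) a, N (z • a) = ‖z‖ * N a)
    (hNadd : ∀ a b, N (a + b) ≤ N a + N b)
    -- (i) every `|||·|||`-continuous linear map into a Banach space yields a continuous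
    -- polynomial `a ↦ Φ(aⁿ)`:
    (hi : ∀ (X : Type u), ∀ (_ : NormedAddCommGroup X) (_ : NormedSpace ℂ X)
      (_ : CompleteSpace X) (Φ : ↥(PnSubmodule (fun a b : A => a * b) n) →ₗ[ℂ] X),
      (∃ C : ℝ, ∀ a, ‖Φ a‖ ≤ C * N a) →
      Continuous fun a : A =>
        Φ ⟨npower (fun a b : A => a * b) a n, Submodule.subset_span ⟨a, rfl⟩⟩)
    -- (ii) every orthogonally additive continuous n-homogeneous polynomial factors through
    -- a `|||·|||`-continuous linear map:
    (hii : ∀ (X : Type u), ∀ (_ : NormedAddCommGroup X) (_ : NormedSpace ℂ X)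
      (_ : CompleteSpace X) (P : A → X),
      (∃ φ : ContinuousMultilinearMap ℂ (fun _ : Fin n => A) X, ∀ a : A, P a = φ fun _ => a) →
      (∀ a b : A, a * b = 0 → b * a = 0 → P (a + b) = P a + P b) →
      ∃ Φ : ↥(PnSubmodule (fun a b : A => a * b) n) →ₗ[ℂ] X,
        (∃ C : ℝ, ∀ a, ‖Φ a‖ ≤ C * N a) ∧
        ∀ a : A, P a =
          Φ ⟨npower (fun a b : A => a * b) a n, Submodule.subset_span ⟨a, rfl⟩⟩) :
    ∃ M₁ M₂ : ℝ, 0 < M₁ ∧ 0 < M₂ ∧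
      ∀ a : ↥(PnSubmodule (fun a b : A => a * b) n),
        M₁ * ‖(a : A)‖ ≤ N a ∧
        N a ≤ M₂ * PnNorm (fun a b : A => a * b) n (a : A) := by
  have hn0 : n ≠ 0 := by omega
  let p : Seminorm ℂ (PnSubmodule (· * ·) n : Submodule ℂ A) := Seminorm.of N hNadd hNsmul
  obtain ⟨φ, hφ⟩ := exists_continuousMultilinearMap_npower ℂ A hn0
  obtain ⟨Φ₀, ⟨C, hC⟩, hΦ₀⟩ := hii A inferInstance inferInstance inferInstance
    (fun a => npower (· * ·) a n) ⟨φ, hφ⟩ fun a b hab hba => npower_add_of_mul_eq_zero hab hba n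
  have hincl : Φ₀ = (PnSubmodule _ n).subtype := PnSubmodule.linearMap_eq_subtype hΦ₀
  obtain ⟨X, hXnorm, hXspace, hXcomplete, Φ, hΦ⟩ := p.exists_linearMap_norm_eq
  have hcont := hi X hXnorm hXspace hXcomplete Φ ⟨1, fun x => (hΦ x).trans_le (one_mul _).ge⟩
  obtain ⟨K, hK, hbound⟩ := exists_le_mul_norm_pow_of_continuousAt (𝕜 := ℂ) hn0
    (f := fun a => p (powPn (· * ·) n a))
    (fun z a => by rw [powPn_smul hn0, map_smul_eq_mul, norm_pow])
    (by simp only [← hΦ]; exact hcont.norm.continuousAt)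
  refine ⟨(max C 1)⁻¹, K, by positivity, hK, fun x => ⟨?_, p.le_mul_PnNorm hn0 hK hbound x⟩⟩
  rw [inv_mul_le_iff₀ (by positivity)]
  calc ‖(x : A)‖ = ‖Φ₀ x‖ := by rw [hincl]; rfl
    _ ≤ C * N x := hC x
    _ ≤ max C 1 * N x := by gcongr; exacts [apply_nonneg p x, le_max_left C 1]

theorem statement8 (n : ℕ) (hn : 2 ≤ n)
    (A : Type u) [NonUnitalNormedRing A] [NormedSpace ℂ A] [IsScalarTower ℂ A A]
    [SMulCommClass ℂ A A] [CompleteSpace A]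
    -- `|||·|||` is a norm on `𝒫ₙ(A)`:
    (N : ↥(PnSubmodule (fun a b : A => a * b) n) → ℝ)
    (hN0 : ∀ a, N a = 0 ↔ a = 0)
    (hNsmul : ∀ (z : ℂ) a, N (z • a) = ‖z‖ * N a)
    (hNadd : ∀ a b, N (a + b) ≤ N a + N b)
    -- (i) every `|||·|||`-continuous linear map into a Banach space yields a continuous
    -- polynomial `a ↦ Φ(aⁿ)`:
    (hi : ∀ (X : Type u), ∀ (_ : NormedAddCommGroup X) (_ : NormedSpace ℂ X)
      (_ : CompleteSpace X) (Φ : ↥(PnSubmodule (fun a b : A => a * b) n) →ₗ[ℂ] X),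
      (∃ C : ℝ, ∀ a, ‖Φ a‖ ≤ C * N a) →
      Continuous fun a : A =>
        Φ ⟨npower (fun a b : A => a * b) a n, Submodule.subset_span ⟨a, rfl⟩⟩)
    -- (ii) every orthogonally additive continuous n-homogeneous polynomial factors through
    -- a `|||·|||`-continuous linear map:
    (hii : ∀ (X : Type u), ∀ (_ : NormedAddCommGroup X) (_ : NormedSpace ℂ X)
      (_ : CompleteSpace X) (P : A → X),
      (∃ φ : ContinuousMultilinearMap ℂ (fun _ : Fin n => A) X, ∀ a : A, P a = φ fun _ => a) →
      (∀ a b : A, a * b = 0 → b * a = 0 → P (a + b) = P a + P b) →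
      ∃ Φ : ↥(PnSubmodule (fun a b : A => a * b) n) →ₗ[ℂ] X,
        (∃ C : ℝ, ∀ a, ‖Φ a‖ ≤ C * N a) ∧
        ∀ a : A, P a =
          Φ ⟨npower (fun a b : A => a * b) a n, Submodule.subset_span ⟨a, rfl⟩⟩) :
    ∃ M₁ M₂ : ℝ, 0 < M₁ ∧ 0 < M₂ ∧
      ∀ a : ↥(PnSubmodule (fun a b : A => a * b) n),
        M₁ * ‖(a : A)‖ ≤ N a ∧
        N a ≤ M₂ * PnNorm (fun a b : A => a * b) n (a : A) :=
  statement8_general n hn A N hNsmul hNadd hi hii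

end
end

section
/- Fix an integer n ≥ 2 and let A be a Banach algebra. Then 𝒫ₙ(A) = { Σ_{j=1}^m Sₙ(a_{1,j}, …, a_{n,j}) : a_{1,j}, …, a_{n,j} ∈ A, m ∈ ℕ }, and the formula ‖a‖_{𝒮ₙ} = inf{ Σ_{j=1}^m ‖a_{1,j}‖⋯‖a_{n,j}‖ : a = Σ_{j=1}^m Sₙ(a_{1,j}, …, a_{n,j}) } defines a norm on 𝒫ₙ(A) satisfying ‖a‖ ≤ ‖a‖_{𝒮ₙ} ≤ ‖a‖_{𝒫ₙ} ≤ (nⁿ/n!)‖a‖_{𝒮ₙ} for all a ∈ 𝒫ₙ(A). -/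
/- Statement 9: For a Banach algebra `A`, `𝒫ₙ(A)` equals the set of finite sums of values of
the symmetric map `Sₙ`, and `‖a‖_{𝒮ₙ} = inf { Σ ‖a_{1,j}‖⋯‖a_{n,j}‖ : a = Σ Sₙ(a_{1,j},…,a_{n,j}) }`
defines a norm on `𝒫ₙ(A)` with `‖a‖ ≤ ‖a‖_{𝒮ₙ} ≤ ‖a‖_{𝒫ₙ} ≤ (nⁿ/n!)‖a‖_{𝒮ₙ}`. -/

noncomputable section

/-- Ordered product of a nonempty list (junk value `0` for the empty list). -/
def lprod {A : Type*} [Zero A] (mul : A → A → A) : List A → A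
  | [] => 0
  | [a] => a
  | a :: b :: l => mul a (lprod mul (b :: l))

/-- The symmetric n-linear map `Sₙ(a₁,…,aₙ) = (1/n!) Σ_{σ ∈ 𝔖ₙ} a_{σ(1)} ⋯ a_{σ(n)}`. -/
def Sn {A : Type*} [AddCommGroup A] [Module ℂ A] (mul : A → A → A) (n : ℕ)
    (v : Fin n → A) : A :=
  ((n.factorial : ℂ))⁻¹ • ∑ σ : Equiv.Perm (Fin n), lprod mul (List.ofFn fun i => v (σ i))

/-- The norm `‖·‖_{𝒮ₙ}` on `𝒫ₙ(A)`. -/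
def SnNorm {A : Type*} [NormedAddCommGroup A] [Module ℂ A] (mul : A → A → A) (n : ℕ)
    (a : A) : ℝ :=
  sInf {r : ℝ | ∃ (m : ℕ) (c : Fin m → Fin n → A),
    a = ∑ j, Sn mul n (c j) ∧ r = ∑ j, ∏ i, ‖c j i‖}

set_option linter.unusedSectionVars false
set_option linter.unusedVariables false
set_option maxHeartbeats 1000000


section W
variable {A : Type*} [NonUnitalNormedRing A] [NormedSpace ℂ A] [IsScalarTower ℂ A A]
  [SMulCommClass ℂ A A]

def Wstep (k : ℕ) (g : MultilinearMap ℂ (fun _ : Fin k => A) A) :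
    A →ₗ[ℂ] MultilinearMap ℂ (fun _ : Fin k => A) A where
  toFun a := (LinearMap.mul ℂ A a).compMultilinearMap g
  map_add' a b := by ext v; simp [add_mul]
  map_smul' z a := by ext v; simp [smul_mul_assoc]

def W : (m : ℕ) → MultilinearMap ℂ (fun _ : Fin (m+1) => A) A
  | 0 => MultilinearMap.ofSubsingleton ℂ A A (0 : Fin 1) LinearMap.id
  | m + 1 => LinearMap.uncurryLeft (Wstep (m+1) (W m))

@[simp] lemma W_zero_apply (v : Fin 1 → A) : W 0 v = v 0 := rfl

@[simp] lemma W_succ_apply (m : ℕ) (v : Fin (m+2) → A) :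
    W (m+1) v = v 0 * W m (Fin.tail v) := rfl

lemma lprod_cons {a : A} {l : List A} (h : l ≠ []) :
    lprod (fun a b : A => a * b) (a :: l) = a * lprod (fun a b : A => a * b) l := by
  match l with
  | [] => exact absurd rfl h
  | b :: l' => rfl

lemma lprod_ofFn (m : ℕ) (v : Fin (m+1) → A) :
    lprod (fun a b : A => a * b) (List.ofFn v) = W m v := by
  induction m with
  | zero => simp [lprod, List.ofFn_succ]
  | succ m ih =>
    rw [List.ofFn_succ, lprod_cons (by simp [List.ofFn_succ]), ih, W_succ_apply]
    rfl

lemma npower_eq (m : ℕ) (x : A) :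
    npower (fun a b : A => a * b) x (m+1) = W m (fun _ => x) := by
  show npow1 _ x m = _
  induction m with
  | zero => rfl
  | succ m ih => show x * npow1 _ x m = _; rw [ih, W_succ_apply]; rfl

lemma Sn_eq (m : ℕ) (v : Fin (m+1) → A) :
    Sn (fun a b : A => a * b) (m+1) v
      = (((m+1).factorial : ℂ))⁻¹ • ∑ σ : Equiv.Perm (Fin (m+1)), W m (fun i => v (σ i)) := by
  unfold Sn
  congr 1
  refine Finset.sum_congr rfl fun σ _ => ?_
  exact lprod_ofFn m (fun i => v (σ i))

lemma norm_W_le (m : ℕ) (v : Fin (m+1) → A) : ‖W m v‖ ≤ ∏ i, ‖v i‖ := by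
  induction m with
  | zero => simp [Fin.prod_univ_one]
  | succ m ih =>
    rw [W_succ_apply, Fin.prod_univ_succ]
    calc ‖v 0 * W m (Fin.tail v)‖ ≤ ‖v 0‖ * ‖W m (Fin.tail v)‖ := norm_mul_le _ _
    _ ≤ ‖v 0‖ * ∏ i, ‖Fin.tail v i‖ := by
        exact mul_le_mul_of_nonneg_left (ih _) (norm_nonneg _)
    _ = ‖v 0‖ * ∏ i : Fin (m+1), ‖v i.succ‖ := rfl

lemma norm_Sn_le (m : ℕ) (v : Fin (m+1) → A) :
    ‖Sn (fun a b : A => a * b) (m+1) v‖ ≤ ∏ i, ‖v i‖ := by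
  rw [Sn_eq]
  rw [norm_smul]
  calc ‖(((m+1).factorial : ℂ))⁻¹‖ * ‖∑ σ : Equiv.Perm (Fin (m+1)), W m (fun i => v (σ i))‖
      ≤ ‖(((m+1).factorial : ℂ))⁻¹‖ * ∑ σ : Equiv.Perm (Fin (m+1)), ∏ i, ‖v i‖ := by
        refine mul_le_mul_of_nonneg_left ?_ (norm_nonneg _)
        refine (norm_sum_le _ _).trans (Finset.sum_le_sum fun σ _ => ?_)
        calc ‖W m (fun i => v (σ i))‖ ≤ ∏ i, ‖v (σ i)‖ := norm_W_le m _
        _ = ∏ i, ‖v i‖ := Equiv.prod_comp σ (fun i => ‖v i‖)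
    _ = ∏ i, ‖v i‖ := by
        rw [Finset.sum_const, Finset.card_univ, Fintype.card_perm]
        simp [norm_inv, Complex.norm_natCast]
        rw [inv_mul_cancel_left₀]
        positivity

end W

def eps : Bool → ℂ := fun t => if t then 1 else -1

lemma eps_true : eps true = 1 := rfl
lemma eps_false : eps false = -1 := rfl

lemma sum_eps_pow (k : ℕ) : ∑ t : Bool, eps t ^ k = 1 + (-1 : ℂ)^k := by
  rw [Fintype.sum_bool, eps_true, eps_false, one_pow]

lemma coef_eq (m : ℕ) (r : Fin (m+1) → Fin (m+1)) :
    (∑ b : Fin (m+1) → Bool, (∏ i, eps (b i)) * (∏ i, eps (b (r i))))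
      = if Function.Bijective r then (2:ℂ)^(m+1) else 0 := by
  have hA : ∀ b : Fin (m+1) → Bool,
      (∏ i, eps (b (r i))) = ∏ i, eps (b i) ^ ((Finset.univ.filter fun j => r j = i).card) := by
    intro b
    rw [Finset.prod_comp (fun i => eps (b i)) r]
    refine Finset.prod_subset (Finset.subset_univ _) fun i _ hi => ?_
    have : (Finset.univ.filter fun j => r j = i) = ∅ := by
      rw [Finset.filter_eq_empty_iff]
      intro j _ hj
      exact hi (Finset.mem_image.mpr ⟨j, Finset.mem_univ j, hj⟩)
    rw [this]; simp
  have hB : ∀ b : Fin (m+1) → Bool,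
      (∏ i, eps (b i)) * (∏ i, eps (b (r i)))
        = ∏ i, eps (b i) ^ ((Finset.univ.filter fun j => r j = i).card + 1) := by
    intro b
    rw [hA b, ← Finset.prod_mul_distrib]
    refine Finset.prod_congr rfl fun i _ => ?_
    rw [pow_succ']
  have hC : (∑ b : Fin (m+1) → Bool, ∏ i, eps (b i) ^ ((Finset.univ.filter fun j => r j = i).card + 1))
      = ∏ i, ∑ t : Bool, eps t ^ ((Finset.univ.filter fun j => r j = i).card + 1) := by
    rw [Finset.prod_univ_sum (fun _ => (Finset.univ : Finset Bool))]
    rw [Fintype.piFinset_univ]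
  rw [Finset.sum_congr rfl fun b _ => hB b, hC]
  by_cases hr : Function.Bijective r
  · rw [if_pos hr]
    have hcard : ∀ i, (Finset.univ.filter fun j => r j = i).card = 1 := by
      intro i
      have : (Finset.univ.filter fun j => r j = i) = {(Equiv.ofBijective r hr).symm i} := by
        ext j
        simp only [Finset.mem_filter, Finset.mem_univ, true_and, Finset.mem_singleton]
        rw [Equiv.eq_symm_apply]
        exact ⟨fun h => by simpa [Equiv.ofBijective_apply] using h,
          fun h => by simpa [Equiv.ofBijective_apply] using h⟩
      rw [this, Finset.card_singleton]
    calc ∏ i, ∑ t : Bool, eps t ^ ((Finset.univ.filter fun j => r j = i).card + 1)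
        = ∏ _i : Fin (m+1), (2 : ℂ) := by
          refine Finset.prod_congr rfl fun i _ => ?_
          rw [hcard i, sum_eps_pow]; norm_num
      _ = (2:ℂ)^(m+1) := by rw [Finset.prod_const, Finset.card_univ, Fintype.card_fin]
  · rw [if_neg hr]
    have hsurj : ¬ Function.Surjective r := fun hs =>
      hr ⟨Finite.injective_iff_surjective.mpr hs, hs⟩
    unfold Function.Surjective at hsurj
    push_neg at hsurj
    obtain ⟨i, hi⟩ := hsurj
    refine Finset.prod_eq_zero (Finset.mem_univ i) ?_
    have : (Finset.univ.filter fun j => r j = i) = ∅ := by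
      rw [Finset.filter_eq_empty_iff]; intro j _; exact hi j
    rw [this, Finset.card_empty, sum_eps_pow]
    norm_num

section Polar
variable {A : Type*} [NonUnitalNormedRing A] [NormedSpace ℂ A] [IsScalarTower ℂ A A]
  [SMulCommClass ℂ A A]

lemma sum_bij_perm (m : ℕ) (F : (Fin (m+1) → Fin (m+1)) → A) :
    ∑ r ∈ Finset.univ.filter (fun r : Fin (m+1) → Fin (m+1) => Function.Bijective r), F r
      = ∑ σ : Equiv.Perm (Fin (m+1)), F σ := by
  refine (Finset.sum_bij (fun (σ : Equiv.Perm (Fin (m+1))) _ => ⇑σ) ?_ ?_ ?_ ?_).symm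
  · intro σ _
    exact Finset.mem_filter.mpr ⟨Finset.mem_univ _, σ.bijective⟩
  · intro σ₁ _ σ₂ _ h
    exact Equiv.coe_fn_injective h
  · intro r hr
    obtain ⟨-, hr⟩ := Finset.mem_filter.mp hr
    exact ⟨Equiv.ofBijective r hr, Finset.mem_univ _, rfl⟩
  · intro σ _
    rfl

lemma polar (m : ℕ) (v : Fin (m+1) → A) :
    ∑ b : Fin (m+1) → Bool, (∏ i, eps (b i)) • W m (fun _ => ∑ j, eps (b j) • v j)
      = (((2:ℂ)^(m+1) * ((m+1).factorial : ℂ))) • Sn (fun a b : A => a * b) (m+1) v := by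
  have step1 : ∀ b : Fin (m+1) → Bool,
      W m (fun _ => ∑ j, eps (b j) • v j)
        = ∑ r : Fin (m+1) → Fin (m+1), (∏ i, eps (b (r i))) • W m (fun i => v (r i)) := by
    intro b
    rw [MultilinearMap.map_sum (W m) (fun _ j => eps (b j) • v j)]
    exact Finset.sum_congr rfl fun r _ =>
      MultilinearMap.map_smul_univ (W m) (fun i => eps (b (r i))) (fun i => v (r i))
  calc ∑ b : Fin (m+1) → Bool, (∏ i, eps (b i)) • W m (fun _ => ∑ j, eps (b j) • v j)
      = ∑ b : Fin (m+1) → Bool, ∑ r : Fin (m+1) → Fin (m+1),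
          ((∏ i, eps (b i)) * (∏ i, eps (b (r i)))) • W m (fun i => v (r i)) := by
        refine Finset.sum_congr rfl fun b _ => ?_
        rw [step1 b, Finset.smul_sum]
        exact Finset.sum_congr rfl fun r _ => (smul_smul _ _ _)
    _ = ∑ r : Fin (m+1) → Fin (m+1),
          (∑ b : Fin (m+1) → Bool, (∏ i, eps (b i)) * (∏ i, eps (b (r i)))) • W m (fun i => v (r i)) := by
        rw [Finset.sum_comm]
        exact Finset.sum_congr rfl fun r _ => (Finset.sum_smul).symm
    _ = ∑ r : Fin (m+1) → Fin (m+1),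
          (if Function.Bijective r then (2:ℂ)^(m+1) else 0) • W m (fun i => v (r i)) := by
        exact Finset.sum_congr rfl fun r _ => by rw [coef_eq]
    _ = ∑ r ∈ Finset.univ.filter (fun r : Fin (m+1) → Fin (m+1) => Function.Bijective r),
          (2:ℂ)^(m+1) • W m (fun i => v (r i)) := by
        rw [Finset.sum_filter]
        refine Finset.sum_congr rfl fun r _ => ?_
        by_cases hr : Function.Bijective r <;> simp [hr]
    _ = (2:ℂ)^(m+1) • ∑ σ : Equiv.Perm (Fin (m+1)), W m (fun i => v (σ i)) := by
        rw [sum_bij_perm m (fun r => (2:ℂ)^(m+1) • W m (fun i => v (r i))), Finset.smul_sum]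
    _ = ((2:ℂ)^(m+1) * ((m+1).factorial : ℂ)) • Sn (fun a b : A => a * b) (m+1) v := by
        rw [Sn_eq, smul_smul]
        congr 1
        rw [mul_assoc, mul_inv_cancel₀ (Nat.cast_ne_zero.mpr (Nat.factorial_ne_zero _) : ((m+1).factorial : ℂ) ≠ 0), mul_one]

end Polar

section Conseq
variable {A : Type*} [NonUnitalNormedRing A] [NormedSpace ℂ A] [IsScalarTower ℂ A A]
  [SMulCommClass ℂ A A]

lemma npower_smul_s9 (m : ℕ) (z : ℂ) (x : A) :
    npower (fun a b : A => a * b) (z • x) (m+1)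
      = z^(m+1) • npower (fun a b : A => a * b) x (m+1) := by
  rw [npower_eq, npower_eq]
  have := MultilinearMap.map_smul_univ (W m) (fun _ : Fin (m+1) => z) (fun _ => x)
  simpa [Finset.prod_const, Finset.card_univ] using this

lemma Sn_const (m : ℕ) (x : A) :
    Sn (fun a b : A => a * b) (m+1) (fun _ => x)
      = npower (fun a b : A => a * b) x (m+1) := by
  rw [Sn_eq, npower_eq]
  have h1 : (∑ σ : Equiv.Perm (Fin (m+1)), W m (fun i => (fun _ : Fin (m+1) => x) (σ i)))
      = ((m+1).factorial : ℂ) • W m (fun _ => x) := by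
    rw [Finset.sum_const, Finset.card_univ, Fintype.card_perm, Fintype.card_fin]
    rw [Nat.cast_smul_eq_nsmul]
  rw [h1, inv_smul_smul₀ (Nat.cast_ne_zero.mpr (Nat.factorial_ne_zero _))]

lemma Sn_rep (m : ℕ) (v : Fin (m+1) → A) :
    Sn (fun a b : A => a * b) (m+1) v = ∑ b : Fin (m+1) → Bool,
      (((2:ℂ)^(m+1) * ((m+1).factorial : ℂ))⁻¹ * ∏ i, eps (b i)) •
        npower (fun a b : A => a * b) (∑ j, eps (b j) • v j) (m+1) := by
  have hD : ((2:ℂ)^(m+1) * ((m+1).factorial : ℂ)) ≠ 0 :=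
    mul_ne_zero (pow_ne_zero _ two_ne_zero) (Nat.cast_ne_zero.mpr (Nat.factorial_ne_zero _))
  calc Sn (fun a b : A => a * b) (m+1) v
      = ((2:ℂ)^(m+1) * ((m+1).factorial : ℂ))⁻¹ •
        (((2:ℂ)^(m+1) * ((m+1).factorial : ℂ)) • Sn (fun a b : A => a * b) (m+1) v) := by
        rw [inv_smul_smul₀ hD]
    _ = ((2:ℂ)^(m+1) * ((m+1).factorial : ℂ))⁻¹ •
        ∑ b : Fin (m+1) → Bool, (∏ i, eps (b i)) • W m (fun _ => ∑ j, eps (b j) • v j) := by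
        rw [polar]
    _ = ∑ b : Fin (m+1) → Bool,
        (((2:ℂ)^(m+1) * ((m+1).factorial : ℂ))⁻¹ * ∏ i, eps (b i)) •
          npower (fun a b : A => a * b) (∑ j, eps (b j) • v j) (m+1) := by
        rw [Finset.smul_sum]
        exact Finset.sum_congr rfl fun b _ => by rw [smul_smul, npower_eq]

lemma Sn_smul (m : ℕ) (z : ℂ) (v : Fin (m+1) → A) :
    Sn (fun a b : A => a * b) (m+1) (Function.update v 0 (z • v 0))
      = z • Sn (fun a b : A => a * b) (m+1) v := by
  rw [Sn_eq, Sn_eq]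
  rw [smul_comm]
  congr 1
  rw [Finset.smul_sum]
  refine Finset.sum_congr rfl fun σ _ => ?_
  have h1 : (fun i => Function.update v 0 (z • v 0) (σ i))
      = Function.update (fun i => v (σ i)) (σ.symm 0) (z • v 0) :=
    Function.update_comp_equiv v σ 0 (z • v 0)
  have h2 : v 0 = (fun i => v (σ i)) (σ.symm 0) := by simp
  rw [h1, h2, MultilinearMap.map_update_smul, Function.update_eq_self]

lemma powerMem (m : ℕ) (x : A) :
    npower (fun a b : A => a * b) x (m+1) ∈ PnSubmodule (fun a b : A => a * b) (m+1) :=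
  Submodule.subset_span ⟨x, rfl⟩

lemma Sn_mem (m : ℕ) (v : Fin (m+1) → A) :
    Sn (fun a b : A => a * b) (m+1) v ∈ PnSubmodule (fun a b : A => a * b) (m+1) := by
  rw [Sn_rep]
  exact Submodule.sum_mem _ fun b _ => Submodule.smul_mem _ _ (powerMem m _)

lemma sum_reindex {ι : Type*} [Fintype ι] (g : ι → A) (h : ι → ℝ) :
    ∃ (mm : ℕ) (c : Fin mm → ι), (∑ j, g (c j) = ∑ i, g i) ∧ (∑ j, h (c j) = ∑ i, h i) :=
  ⟨Fintype.card ι, (Fintype.equivFin ι).symm, Equiv.sum_comp _ g, Equiv.sum_comp _ h⟩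

end Conseq

section Reps
variable {A : Type*} [NonUnitalNormedRing A] [NormedSpace ℂ A] [IsScalarTower ℂ A A]
  [SMulCommClass ℂ A A]

lemma mem_powrep (m : ℕ) (a : A) (ha : a ∈ PnSubmodule (fun a b : A => a * b) (m+1)) :
    ∃ (k : ℕ) (c : Fin k → A), a = ∑ j, npower (fun a b : A => a * b) (c j) (m+1) := by
  refine Submodule.span_induction ?_ ?_ ?_ ?_ ha
  · rintro x ⟨y, rfl⟩
    exact ⟨1, fun _ => y, by rw [Fin.sum_univ_one]⟩
  · exact ⟨0, Fin.elim0, by simp⟩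
  · rintro x y _ _ ⟨k₁, c, rfl⟩ ⟨k₂, d, rfl⟩
    refine ⟨k₁ + k₂, Fin.append c d, ?_⟩
    rw [Fin.sum_univ_add]
    congr 1
    · exact Finset.sum_congr rfl fun j _ => by rw [Fin.append_left]
    · exact Finset.sum_congr rfl fun j _ => by rw [Fin.append_right]
  · rintro z x _ ⟨k, c, rfl⟩
    obtain ⟨w, hw⟩ := IsAlgClosed.exists_pow_nat_eq z (n := m+1) (Nat.succ_pos m)
    refine ⟨k, fun j => w • c j, ?_⟩
    rw [Finset.smul_sum]
    exact Finset.sum_congr rfl fun j _ => by rw [npower_smul_s9, hw]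

lemma mem_Snrep (m : ℕ) (a : A) (ha : a ∈ PnSubmodule (fun a b : A => a * b) (m+1)) :
    ∃ (k : ℕ) (c : Fin k → Fin (m+1) → A),
      a = ∑ j, Sn (fun a b : A => a * b) (m+1) (c j) := by
  obtain ⟨k, c, rfl⟩ := mem_powrep m a ha
  exact ⟨k, fun j _ => c j, Finset.sum_congr rfl fun j _ => (Sn_const m (c j)).symm⟩

lemma set_eq (m : ℕ) :
    (PnSubmodule (fun a b : A => a * b) (m+1) : Set A) =
      {x : A | ∃ (k : ℕ) (c : Fin k → Fin (m+1) → A),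
        x = ∑ j, Sn (fun a b : A => a * b) (m+1) (c j)} := by
  ext a
  constructor
  · exact fun ha => mem_Snrep m a ha
  · rintro ⟨k, c, rfl⟩
    exact Submodule.sum_mem _ fun j _ => Sn_mem m (c j)

lemma Sn_eq_zero (m : ℕ) (v : Fin (m+1) → A) (i : Fin (m+1)) (hi : v i = 0) :
    Sn (fun a b : A => a * b) (m+1) v = 0 := by
  rw [Sn_eq]
  have : ∀ σ : Equiv.Perm (Fin (m+1)), W m (fun j => v (σ j)) = 0 := by
    intro σ
    have h0 : v (σ (σ.symm i)) = 0 := by rw [Equiv.apply_symm_apply]; exact hi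
    exact MultilinearMap.map_coord_zero (W m) (σ.symm i) h0
  rw [Finset.sum_congr rfl fun σ _ => this σ]
  simp

lemma eps_norm (t : Bool) : ‖eps t‖ = 1 := by cases t <;> simp [eps]

lemma single_bound (m : ℕ) (v : Fin (m+1) → A) :
    ∃ (k : ℕ) (d : Fin k → A),
      Sn (fun a b : A => a * b) (m+1) v = ∑ j, npower (fun a b : A => a * b) (d j) (m+1) ∧
      ∑ j, ‖d j‖^(m+1) ≤ (((m+1 : ℕ)) :ℝ)^(m+1) / (((m+1).factorial : ℕ) : ℝ) * ∏ i, ‖v i‖ := by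
  by_cases hz : ∃ i, v i = 0
  · obtain ⟨i, hi⟩ := hz
    refine ⟨0, Fin.elim0, by simp [Sn_eq_zero m v i hi], ?_⟩
    have : (∏ i, ‖v i‖) = 0 := Finset.prod_eq_zero (Finset.mem_univ i) (by rw [hi, norm_zero])
    simp [this]
  · push_neg at hz
    set P : ℝ := ∏ i, ‖v i‖ with hP
    have hPpos : 0 < P := Finset.prod_pos fun i _ => norm_pos_iff.mpr (hz i)
    set ρ : ℝ := P ^ ((1:ℝ)/(m+1)) with hρ
    have hρpos : 0 < ρ := Real.rpow_pos_of_pos hPpos _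
    have hρpow : ρ ^ (m+1) = P := by
      rw [hρ, ← Real.rpow_natCast (P ^ ((1:ℝ)/(m+1))) (m+1), ← Real.rpow_mul hPpos.le]
      push_cast
      rw [one_div_mul_cancel (by positivity : ((m:ℝ) + 1) ≠ 0), Real.rpow_one]
    set t : Fin (m+1) → ℝ := fun i => ρ / ‖v i‖ with ht
    have htpos : ∀ i, 0 < t i := fun i => div_pos hρpos (norm_pos_iff.mpr (hz i))
    set u : Fin (m+1) → A := fun i => ((t i : ℂ)) • v i with hu
    have hunorm : ∀ i, ‖u i‖ = ρ := by
      intro i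
      rw [hu]
      simp only [norm_smul, Complex.norm_real, Real.norm_eq_abs, abs_of_pos (htpos i)]
      rw [ht, div_mul_cancel₀]
      exact (norm_pos_iff.mpr (hz i)).ne'
    have hprod_t : (∏ i, (t i : ℂ)) = 1 := by
      rw [← Complex.ofReal_prod]
      have : (∏ i, t i) = 1 := by
        rw [ht]
        rw [Finset.prod_div_distrib, Finset.prod_const, Finset.card_univ, Fintype.card_fin]
        rw [← hP, ← hρpow]
        exact div_self (by positivity)
      rw [this, Complex.ofReal_one]
    have hSn : Sn (fun a b : A => a * b) (m+1) u = Sn (fun a b : A => a * b) (m+1) v := by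
      rw [Sn_eq, Sn_eq]
      congr 1
      refine Finset.sum_congr rfl fun σ _ => ?_
      have : (fun i => u (σ i)) = fun i => ((t (σ i) : ℂ)) • v (σ i) := rfl
      rw [this, MultilinearMap.map_smul_univ]
      rw [Equiv.prod_comp σ (fun i => (t i : ℂ)), hprod_t, one_smul]
    -- now represent Sn u via polarization
    set D : ℂ := (2:ℂ)^(m+1) * ((m+1).factorial : ℂ) with hD
    have hDnorm : ‖D‖ = 2^(m+1) * ((m+1).factorial : ℝ) := by
      rw [hD, norm_mul, norm_pow, Complex.norm_ofNat, Complex.norm_natCast]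
    have hDne : D ≠ 0 := by
      rw [hD]
      exact mul_ne_zero (pow_ne_zero _ two_ne_zero) (Nat.cast_ne_zero.mpr (Nat.factorial_ne_zero _))
    have hrep := Sn_rep m u
    -- pick roots
    have hroot : ∀ b : Fin (m+1) → Bool, ∃ w : ℂ, w^(m+1) = D⁻¹ * ∏ i, eps (b i) :=
      fun b => IsAlgClosed.exists_pow_nat_eq _ (Nat.succ_pos m)
    choose w hw using hroot
    set d : (Fin (m+1) → Bool) → A := fun b => w b • (∑ j, eps (b j) • u j) with hd
    have hdrep : Sn (fun a b : A => a * b) (m+1) v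
        = ∑ b : Fin (m+1) → Bool, npower (fun a b : A => a * b) (d b) (m+1) := by
      rw [← hSn, hrep]
      refine Finset.sum_congr rfl fun b _ => ?_
      rw [hd, npower_smul_s9, hw b, hD]
    have hwnorm : ∀ b, ‖w b‖^(m+1) = ‖D‖⁻¹ := by
      intro b
      have : ‖w b ^ (m+1)‖ = ‖D⁻¹ * ∏ i, eps (b i)‖ := by rw [hw b]
      rw [norm_pow, norm_mul, norm_inv] at this
      rw [this]
      have : ‖∏ i, eps (b i)‖ = 1 := by
        rw [norm_prod]
        exact Finset.prod_eq_one fun i _ => eps_norm (b i)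
      rw [this, mul_one]
    have hdnorm : ∀ b, ‖d b‖^(m+1) ≤ ‖D‖⁻¹ * ((m+1) * ρ)^(m+1) := by
      intro b
      rw [hd]
      simp only [norm_smul, mul_pow, hwnorm b]
      refine mul_le_mul_of_nonneg_left ?_ (by positivity)
      rw [← mul_pow]
      refine pow_le_pow_left₀ (norm_nonneg _) ?_ _
      calc ‖∑ j, eps (b j) • u j‖ ≤ ∑ j, ‖eps (b j) • u j‖ := norm_sum_le _ _
        _ = ∑ j : Fin (m+1), ρ := by
            refine Finset.sum_congr rfl fun j _ => ?_
            rw [norm_smul, eps_norm, one_mul, hunorm]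
        _ = (m+1) * ρ := by
            rw [Finset.sum_const, Finset.card_univ, Fintype.card_fin, nsmul_eq_mul]
            push_cast; ring
    have hsum : ∑ b : Fin (m+1) → Bool, ‖d b‖^(m+1)
        ≤ (((m+1 : ℕ)) :ℝ)^(m+1) / (((m+1).factorial : ℕ) : ℝ) * P := by
      calc ∑ b : Fin (m+1) → Bool, ‖d b‖^(m+1)
          ≤ ∑ _b : Fin (m+1) → Bool, ‖D‖⁻¹ * ((m+1) * ρ)^(m+1) :=
            Finset.sum_le_sum fun b _ => hdnorm b
        _ = 2^(m+1) * (‖D‖⁻¹ * ((m+1) * ρ)^(m+1)) := by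
            rw [Finset.sum_const, Finset.card_univ, Fintype.card_fun, Fintype.card_bool,
              Fintype.card_fin, nsmul_eq_mul]
            push_cast; ring
        _ = (((m+1 : ℕ)) :ℝ)^(m+1) / (((m+1).factorial : ℕ) : ℝ) * P := by
            rw [hDnorm, ← hρpow, mul_pow]
            have hf : (0:ℝ) < ((m+1).factorial : ℝ) := by
              exact_mod_cast Nat.factorial_pos _
            push_cast
            field_simp
    obtain ⟨k, c, hc1, hc2⟩ := sum_reindex (fun b : Fin (m+1) → Bool =>
        npower (fun a b : A => a * b) (d b) (m+1)) (fun b => ‖d b‖^(m+1))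
    exact ⟨k, fun j => d (c j), by rw [hdrep, ← hc1], by rw [hc2]; exact hsum⟩

end Reps

section Norms
variable {A : Type*} [NonUnitalNormedRing A] [NormedSpace ℂ A] [IsScalarTower ℂ A A]
  [SMulCommClass ℂ A A]

def SnSet (n : ℕ) (a : A) : Set ℝ :=
  {r : ℝ | ∃ (m : ℕ) (c : Fin m → Fin n → A),
    a = ∑ j, Sn (fun a b : A => a * b) n (c j) ∧ r = ∑ j, ∏ i, ‖c j i‖}

def PnSet (n : ℕ) (a : A) : Set ℝ :=
  {r : ℝ | ∃ (m : ℕ) (c : Fin m → A),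
    a = ∑ j, npower (fun a b : A => a * b) (c j) n ∧ r = ∑ j, ‖c j‖ ^ n}

lemma SnNorm_eq (n : ℕ) (a : A) : SnNorm (fun a b : A => a * b) n a = sInf (SnSet n a) := rfl

lemma PnNorm_eq (n : ℕ) (a : A) : PnNorm (fun a b : A => a * b) n a = sInf (PnSet n a) := rfl

lemma SnSet_norm_le (m : ℕ) (a : A) {r : ℝ} (hr : r ∈ SnSet (m+1) a) : ‖a‖ ≤ r := by
  obtain ⟨k, c, rfl, rfl⟩ := hr
  calc ‖∑ j, Sn (fun a b : A => a * b) (m+1) (c j)‖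
      ≤ ∑ j, ‖Sn (fun a b : A => a * b) (m+1) (c j)‖ := norm_sum_le _ _
    _ ≤ ∑ j, ∏ i, ‖c j i‖ := Finset.sum_le_sum fun j _ => norm_Sn_le m (c j)

lemma SnSet_bdd (m : ℕ) (a : A) : BddBelow (SnSet (m+1) a) :=
  ⟨0, fun r hr => (norm_nonneg a).trans (SnSet_norm_le m a hr)⟩

lemma SnSet_nonempty (m : ℕ) (a : A) (ha : a ∈ PnSubmodule (fun a b : A => a * b) (m+1)) :
    (SnSet (m+1) a).Nonempty := by
  obtain ⟨k, c, hc⟩ := mem_Snrep m a ha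
  exact ⟨∑ j, ∏ i, ‖c j i‖, k, c, hc, rfl⟩

lemma norm_le_SnNorm (m : ℕ) (a : A) (ha : a ∈ PnSubmodule (fun a b : A => a * b) (m+1)) :
    ‖a‖ ≤ SnNorm (fun a b : A => a * b) (m+1) a :=
  le_csInf (SnSet_nonempty m a ha) fun r hr => SnSet_norm_le m a hr

lemma SnNorm_nonneg (m : ℕ) (a : A) : 0 ≤ SnNorm (fun a b : A => a * b) (m+1) a :=
  Real.sInf_nonneg fun r hr => (norm_nonneg a).trans (SnSet_norm_le m a hr)

lemma SnNorm_zero (m : ℕ) : SnNorm (fun a b : A => a * b) (m+1) (0 : A) = 0 := by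
  refine le_antisymm ?_ (SnNorm_nonneg m 0)
  refine csInf_le (SnSet_bdd m 0) ⟨0, Fin.elim0, by simp, by simp⟩

lemma prod_update_norm (m : ℕ) (c : Fin (m+1) → A) (z : ℂ) :
    ∏ i, ‖Function.update c 0 (z • c 0) i‖ = ‖z‖ * ∏ i, ‖c i‖ := by
  have h : (fun i => ‖Function.update c 0 (z • c 0) i‖)
      = Function.update (fun i => ‖c i‖) 0 (‖z‖ * ‖c 0‖) := by
    funext i
    rcases eq_or_ne i 0 with rfl | h
    · simp [norm_smul]
    · simp [Function.update_of_ne h]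
  rw [h, Finset.prod_update_of_mem (Finset.mem_univ 0)]
  rw [Finset.sdiff_singleton_eq_erase, ← Finset.mul_prod_erase Finset.univ _ (Finset.mem_univ 0)]
  ring

lemma smul_mem_SnSet (m : ℕ) (z : ℂ) (a : A) {r : ℝ} (hr : r ∈ SnSet (m+1) a) :
    ‖z‖ * r ∈ SnSet (m+1) (z • a) := by
  obtain ⟨k, c, ha, hrv⟩ := hr
  refine ⟨k, fun j => Function.update (c j) 0 (z • c j 0), ?_, ?_⟩
  · rw [ha, Finset.smul_sum]
    exact (Finset.sum_congr rfl fun j _ => Sn_smul m z (c j)).symm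
  · rw [hrv, Finset.mul_sum]
    exact (Finset.sum_congr rfl fun j _ => prod_update_norm m (c j) z).symm

lemma add_mem_SnSet (m : ℕ) (a b : A) {r s : ℝ} (hr : r ∈ SnSet (m+1) a)
    (hs : s ∈ SnSet (m+1) b) : r + s ∈ SnSet (m+1) (a + b) := by
  obtain ⟨k₁, c, ha, hrv⟩ := hr
  obtain ⟨k₂, d, hb, hsv⟩ := hs
  refine ⟨k₁ + k₂, Fin.append c d, ?_, ?_⟩
  · rw [ha, hb, Fin.sum_univ_add]
    congr 1
    · exact Finset.sum_congr rfl fun j _ => by rw [Fin.append_left]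
    · exact Finset.sum_congr rfl fun j _ => by rw [Fin.append_right]
  · rw [hrv, hsv, Fin.sum_univ_add]
    congr 1
    · exact Finset.sum_congr rfl fun j _ => by rw [Fin.append_left]
    · exact Finset.sum_congr rfl fun j _ => by rw [Fin.append_right]

lemma SnNorm_triangle (m : ℕ) (a b : A)
    (ha : a ∈ PnSubmodule (fun a b : A => a * b) (m+1))
    (hb : b ∈ PnSubmodule (fun a b : A => a * b) (m+1)) :
    SnNorm (fun a b : A => a * b) (m+1) (a + b)
      ≤ SnNorm (fun a b : A => a * b) (m+1) a + SnNorm (fun a b : A => a * b) (m+1) b := by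
  have h1 : ∀ s ∈ SnSet (m+1) b,
      SnNorm (fun a b : A => a * b) (m+1) (a + b) ≤ SnNorm (fun a b : A => a * b) (m+1) a + s := by
    intro s hs
    have h2 : ∀ r ∈ SnSet (m+1) a,
        SnNorm (fun a b : A => a * b) (m+1) (a + b) - s ≤ r := by
      intro r hr
      have := csInf_le (SnSet_bdd m (a + b)) (add_mem_SnSet m a b hr hs)
      rw [SnNorm_eq]
      linarith
    have := le_csInf (SnSet_nonempty m a ha) h2
    rw [← SnNorm_eq] at this
    linarith
  have h3 : ∀ s ∈ SnSet (m+1) b,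
      SnNorm (fun a b : A => a * b) (m+1) (a + b) - SnNorm (fun a b : A => a * b) (m+1) a ≤ s :=
    fun s hs => by linarith [h1 s hs]
  have := le_csInf (SnSet_nonempty m b hb) h3
  rw [← SnNorm_eq] at this
  linarith

lemma SnNorm_smul_le (m : ℕ) (z : ℂ) (a : A)
    (ha : a ∈ PnSubmodule (fun a b : A => a * b) (m+1)) :
    SnNorm (fun a b : A => a * b) (m+1) (z • a)
      ≤ ‖z‖ * SnNorm (fun a b : A => a * b) (m+1) a := by
  rcases eq_or_ne z 0 with rfl | hz
  · rw [zero_smul, SnNorm_zero, norm_zero, zero_mul]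
  · have hz' : 0 < ‖z‖ := norm_pos_iff.mpr hz
    have h : ∀ r ∈ SnSet (m+1) a,
        SnNorm (fun a b : A => a * b) (m+1) (z • a) ≤ ‖z‖ * r :=
      fun r hr => csInf_le (SnSet_bdd m (z • a)) (smul_mem_SnSet m z a hr)
    have h2 : SnNorm (fun a b : A => a * b) (m+1) (z • a) / ‖z‖
        ≤ SnNorm (fun a b : A => a * b) (m+1) a := by
      refine le_csInf (SnSet_nonempty m a ha) fun r hr => ?_
      rw [div_le_iff₀ hz']
      rw [mul_comm]
      exact h r hr
    rw [div_le_iff₀ hz'] at h2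
    rw [mul_comm] at h2
    exact h2

lemma SnNorm_smul (m : ℕ) (z : ℂ) (a : A)
    (ha : a ∈ PnSubmodule (fun a b : A => a * b) (m+1)) :
    SnNorm (fun a b : A => a * b) (m+1) (z • a)
      = ‖z‖ * SnNorm (fun a b : A => a * b) (m+1) a := by
  rcases eq_or_ne z 0 with rfl | hz
  · rw [zero_smul, SnNorm_zero, norm_zero, zero_mul]
  · refine le_antisymm (SnNorm_smul_le m z a ha) ?_
    have h := SnNorm_smul_le m z⁻¹ (z • a) (Submodule.smul_mem _ z ha)
    rw [inv_smul_smul₀ hz, norm_inv] at h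
    have hz' : 0 < ‖z‖ := norm_pos_iff.mpr hz
    calc ‖z‖ * SnNorm (fun a b : A => a * b) (m+1) a
        ≤ ‖z‖ * (‖z‖⁻¹ * SnNorm (fun a b : A => a * b) (m+1) (z • a)) :=
          mul_le_mul_of_nonneg_left h hz'.le
      _ = SnNorm (fun a b : A => a * b) (m+1) (z • a) := by
          rw [← mul_assoc, mul_inv_cancel₀ hz'.ne', one_mul]

lemma PnSet_subset_SnSet (m : ℕ) (a : A) : PnSet (m+1) a ⊆ SnSet (m+1) a := by
  rintro r ⟨k, c, ha, hrv⟩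
  refine ⟨k, fun j _ => c j, ?_, ?_⟩
  · rw [ha]
    exact Finset.sum_congr rfl fun j _ => (Sn_const m (c j)).symm
  · rw [hrv]
    refine Finset.sum_congr rfl fun j _ => ?_
    rw [Finset.prod_const, Finset.card_univ, Fintype.card_fin]

lemma PnSet_nonempty (m : ℕ) (a : A) (ha : a ∈ PnSubmodule (fun a b : A => a * b) (m+1)) :
    (PnSet (m+1) a).Nonempty := by
  obtain ⟨k, c, hc⟩ := mem_powrep m a ha
  exact ⟨∑ j, ‖c j‖ ^ (m+1), k, c, hc, rfl⟩

lemma PnSet_bdd (m : ℕ) (a : A) : BddBelow (PnSet (m+1) a) := by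
  refine ⟨0, ?_⟩
  rintro r ⟨k, c, -, rfl⟩
  exact Finset.sum_nonneg fun j _ => pow_nonneg (norm_nonneg _) _

lemma SnNorm_le_PnNorm (m : ℕ) (a : A) (ha : a ∈ PnSubmodule (fun a b : A => a * b) (m+1)) :
    SnNorm (fun a b : A => a * b) (m+1) a ≤ PnNorm (fun a b : A => a * b) (m+1) a :=
  csInf_le_csInf (SnSet_bdd m a) (PnSet_nonempty m a ha) (PnSet_subset_SnSet m a)

lemma PnNorm_le_SnNorm (m : ℕ) (a : A) (ha : a ∈ PnSubmodule (fun a b : A => a * b) (m+1)) :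
    PnNorm (fun a b : A => a * b) (m+1) a
      ≤ (((m+1 : ℕ)) : ℝ)^(m+1) / (((m+1).factorial : ℕ) : ℝ)
        * SnNorm (fun a b : A => a * b) (m+1) a := by
  set C : ℝ := (((m+1 : ℕ)) : ℝ)^(m+1) / (((m+1).factorial : ℕ) : ℝ) with hC
  have hCpos : 0 < C := by
    rw [hC]
    have h1 : (0:ℝ) < (((m+1 : ℕ)) : ℝ)^(m+1) := by positivity
    have h2 : (0:ℝ) < (((m+1).factorial : ℕ) : ℝ) := by exact_mod_cast Nat.factorial_pos _
    exact div_pos h1 h2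
  have key : ∀ r ∈ SnSet (m+1) a, PnNorm (fun a b : A => a * b) (m+1) a ≤ C * r := by
    rintro r ⟨k, c, ha', hrv⟩
    choose k' d hd1 hd2 using fun j => single_bound m (c j)
    obtain ⟨K, e, he1, he2⟩ := sum_reindex
      (fun p : Σ j : Fin k, Fin (k' j) => npower (fun a b : A => a * b) (d p.1 p.2) (m+1))
      (fun p : Σ j : Fin k, Fin (k' j) => ‖d p.1 p.2‖ ^ (m+1))
    have hsig : ∀ (F : (Σ j : Fin k, Fin (k' j)) → ℝ),
        ∑ p : Σ j : Fin k, Fin (k' j), F p = ∑ j, ∑ i, F ⟨j, i⟩ := by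
      intro F
      rw [← Finset.univ_sigma_univ, Finset.sum_sigma]
    have hsigA : ∀ (F : (Σ j : Fin k, Fin (k' j)) → A),
        ∑ p : Σ j : Fin k, Fin (k' j), F p = ∑ j, ∑ i, F ⟨j, i⟩ := by
      intro F
      rw [← Finset.univ_sigma_univ, Finset.sum_sigma]
    have hmem : (∑ p : Σ j : Fin k, Fin (k' j), ‖d p.1 p.2‖ ^ (m+1)) ∈ PnSet (m+1) a := by
      refine ⟨K, fun j => d (e j).1 (e j).2, ?_, he2.symm⟩
      rw [ha']
      rw [Finset.sum_congr rfl fun j _ => hd1 j]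
      rw [← hsigA (fun p => npower (fun a b : A => a * b) (d p.1 p.2) (m+1))]
      exact he1.symm
    calc PnNorm (fun a b : A => a * b) (m+1) a
        ≤ ∑ p : Σ j : Fin k, Fin (k' j), ‖d p.1 p.2‖ ^ (m+1) := csInf_le (PnSet_bdd m a) hmem
      _ = ∑ j, ∑ i, ‖d j i‖ ^ (m+1) := hsig _
      _ ≤ ∑ j, C * ∏ i, ‖c j i‖ :=
          Finset.sum_le_sum fun j _ => by rw [hC]; exact hd2 j
      _ = C * r := by rw [hrv, Finset.mul_sum]
  have h2 : PnNorm (fun a b : A => a * b) (m+1) a / C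
      ≤ SnNorm (fun a b : A => a * b) (m+1) a := by
    refine le_csInf (SnSet_nonempty m a ha) fun r hr => ?_
    rw [div_le_iff₀ hCpos, mul_comm]
    exact key r hr
  rw [div_le_iff₀ hCpos, mul_comm] at h2
  exact h2

end Norms

theorem statement9 (n : ℕ) (hn : 2 ≤ n)
    (A : Type*) [NonUnitalNormedRing A] [NormedSpace ℂ A] [IsScalarTower ℂ A A]
    [SMulCommClass ℂ A A] [CompleteSpace A] :
    (PnSubmodule (fun a b : A => a * b) n : Set A) =
      {x : A | ∃ (m : ℕ) (c : Fin m → Fin n → A),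
        x = ∑ j, Sn (fun a b : A => a * b) n (c j)} ∧
    (∀ a ∈ PnSubmodule (fun a b : A => a * b) n,
      0 ≤ SnNorm (fun a b : A => a * b) n a) ∧
    (∀ a ∈ PnSubmodule (fun a b : A => a * b) n,
      (SnNorm (fun a b : A => a * b) n a = 0 ↔ a = 0)) ∧
    (∀ (z : ℂ), ∀ a ∈ PnSubmodule (fun a b : A => a * b) n,
      SnNorm (fun a b : A => a * b) n (z • a) = ‖z‖ * SnNorm (fun a b : A => a * b) n a) ∧
    (∀ a ∈ PnSubmodule (fun a b : A => a * b) n, ∀ b ∈ PnSubmodule (fun a b : A => a * b) n,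
      SnNorm (fun a b : A => a * b) n (a + b) ≤
        SnNorm (fun a b : A => a * b) n a + SnNorm (fun a b : A => a * b) n b) ∧
    (∀ a ∈ PnSubmodule (fun a b : A => a * b) n,
      ‖a‖ ≤ SnNorm (fun a b : A => a * b) n a ∧
      SnNorm (fun a b : A => a * b) n a ≤ PnNorm (fun a b : A => a * b) n a ∧
      PnNorm (fun a b : A => a * b) n a ≤
        ((n : ℝ) ^ n / (n.factorial : ℝ)) * SnNorm (fun a b : A => a * b) n a) := by
  obtain ⟨m, rfl⟩ : ∃ m, n = m + 1 := ⟨n - 1, by omega⟩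
  refine ⟨set_eq m, ?_, ?_, ?_, ?_, ?_⟩
  · exact fun a _ => SnNorm_nonneg m a
  · intro a ha
    constructor
    · intro h
      have h2 := norm_le_SnNorm m a ha
      rw [h] at h2
      exact norm_le_zero_iff.mp h2
    · rintro rfl
      exact SnNorm_zero m
  · exact fun z a ha => SnNorm_smul m z a ha
  · exact fun a ha b hb => SnNorm_triangle m a b ha hb
  · exact fun a ha =>
      ⟨norm_le_SnNorm m a ha, SnNorm_le_PnNorm m a ha, PnNorm_le_SnNorm m a ha⟩

end
end
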